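/- arXiv:1407.7771 — 6 statements merged into one kernel-verified Lean document; each statement's English description precedes it below -/
import Mathlib

section
/- Diophantine property of the strong unstable direction (generalized Liouville theorem, as used in the proof of the Main Theorem). Let A ∈ M₃(ℤ) have characteristic polynomial irreducible over ℚ, let λ ∈ ℝ be an eigenvalue of A, and let β₁, β₂ ∈ ℝ be such that (β₁, β₂, 1) is an eigenvector of A for λ. Then there exists c > 0 such that for all (p₁, p₂) ∈ ℤ² \ {(0,0)} and all q ∈ ℤ one has |p₁β₁ + p₂β₂ − q| > c / (max(|p₁|, |p₂|))². -/
/-!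
For an integer vector `u = (p₁, p₂, -q) ≠ 0`, the Krylov matrix `U` with rows `u, uA, uA²` is
nonsingular because the characteristic polynomial of `A` is irreducible, so `|det U| ≥ 1`.
Since `v = (β₁, β₂, 1)` is an eigenvector, `U v = ⟨u, v⟩ (1, λ, λ²)`, and Cramer's rule for the
last coordinate of `v` gives `det U = ⟨u, v⟩ det U'`, where `U'` is `U` with its last column
replaced by `(1, λ, λ²)`. Two columns of `U'` are `O(‖u‖)` and the third is bounded, so
`1 ≤ |⟨u, v⟩| O(‖u‖²)`; and `‖u‖ = O(max (|p₁|, |p₂|))` as soon as `|⟨u, v⟩| < 1`.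
-/

open Matrix Polynomial

open scoped Nat in
theorem Matrix.det_le_of_le_col {R S n : Type*} [CommRing R] [Nontrivial R] [CommRing S]
    [LinearOrder S] [IsStrictOrderedRing S] [Fintype n] [DecidableEq n] {A : Matrix n n R}
    {abv : AbsoluteValue R S} {x : n → S} (hx : ∀ i j, abv (A i j) ≤ x j) :
    abv A.det ≤ (Fintype.card n)! • ∏ j, x j :=
  calc
    abv A.det = abv (∑ σ : Equiv.Perm n, Equiv.Perm.sign σ • ∏ i, A (σ i) i) :=
      congr_arg abv (det_apply _)
    _ ≤ ∑ σ : Equiv.Perm n, abv (Equiv.Perm.sign σ • ∏ i, A (σ i) i) := abv.sum_le _ _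
    _ = ∑ σ : Equiv.Perm n, ∏ i, abv (A (σ i) i) :=
      Finset.sum_congr rfl fun σ _ => by rw [abv.map_units_int_smul, abv.map_prod]
    _ ≤ ∑ _σ : Equiv.Perm n, ∏ j, x j := by gcongr; simp [hx]
    _ = (Fintype.card n)! • ∏ j, x j := by simp [Fintype.card_perm]

theorem Matrix.det_eq_det_updateCol_of_mulVec_eq {R n : Type*} [CommRing R] [Fintype n]
    [DecidableEq n] {M : Matrix n n R} {v b : n → R} {j : n} (h : M *ᵥ v = b) (hj : v j = 1) :
    M.det = (M.updateCol j b).det := by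
  have hcramer : M.cramer b = M.det • v := by
    rw [cramer_eq_adjugate_mulVec, ← h, mulVec_mulVec, adjugate_mul, smul_mulVec, one_mulVec]
  simpa [cramer_apply, hj] using (congrFun hcramer j).symm

theorem Matrix.isUnit_aeval_of_not_charpoly_dvd {K n : Type*} [Field K] [Fintype n]
    [DecidableEq n] {A : Matrix n n K} (hA : Irreducible A.charpoly) {g : K[X]}
    (hg : ¬A.charpoly ∣ g) : IsUnit (aeval A g) := by
  obtain ⟨a, b, hab⟩ := hA.coprime_iff_not_dvd.mpr hg
  have hinv : aeval A b * aeval A g = 1 := by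
    simpa [aeval_self_charpoly] using congrArg (aeval A) hab
  exact (isUnit_iff_isUnit_det _).mpr (isUnit_det_of_left_inverse hinv)

def krylovMatrix {R : Type*} [CommRing R] {n : ℕ} (A : Matrix (Fin n) (Fin n) R)
    (u : Fin n → R) : Matrix (Fin n) (Fin n) R :=
  Matrix.of fun k => u ᵥ* A ^ (k : ℕ)

section Krylov

variable {n : ℕ}

theorem krylovMatrix_map {R S : Type*} [CommRing R] [CommRing S] (f : R →+* S)
    (A : Matrix (Fin n) (Fin n) R) (u : Fin n → R) :
    (krylovMatrix A u).map f = krylovMatrix (A.map f) (f ∘ u) := by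
  ext k j
  simp [krylovMatrix, RingHom.map_vecMul, Matrix.map_pow]

theorem det_krylovMatrix_ne_zero {K : Type*} [Field K] {A : Matrix (Fin n) (Fin n) K}
    (hA : Irreducible A.charpoly) {u : Fin n → K} (hu : u ≠ 0) : (krylovMatrix A u).det ≠ 0 := by
  rw [← isUnit_iff_ne_zero, ← isUnit_iff_isUnit_det, ← linearIndependent_rows_iff_isUnit,
    Fintype.linearIndependent_iff]
  intro c hc
  set g : K[X] := ∑ k : Fin n, C (c k) * X ^ (k : ℕ)
  have hug : u ᵥ* aeval A g = 0 := by
    simpa [g, krylovMatrix, vecMul_sum, Algebra.algebraMap_eq_smul_one, vecMul_smul] using hc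
  have hg : g = 0 := by
    by_contra hg
    refine hu ?_
    have hndvd : ¬A.charpoly ∣ g := fun hdvd => by
      have hle := natDegree_le_of_dvd hdvd hg
      have hlt := (natDegree_lt_iff_degree_lt hg).mpr (degree_sum_fin_lt c)
      rw [charpoly_natDegree_eq_dim, Fintype.card_fin] at hle
      omega
    have hunit := isUnit_aeval_of_not_charpoly_dvd hA hndvd
    simpa [vecMul_vecMul, mul_nonsing_inv _ ((isUnit_iff_isUnit_det _).mp hunit)] using
      congrArg (· ᵥ* (aeval A g)⁻¹) hug
  intro k
  simpa [g, finsetSum_coeff, coeff_C_mul_X_pow, Fin.val_inj] using congrArg (coeff · k) hg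

theorem one_le_abs_det_krylovMatrix_intCast {A : Matrix (Fin n) (Fin n) ℤ}
    (hA : Irreducible (A.charpoly.map (Int.castRingHom ℚ))) {u : Fin n → ℤ} (hu : u ≠ 0) :
    1 ≤ |(krylovMatrix (A.map (Int.cast : ℤ → ℝ)) fun i => (u i : ℝ)).det| := by
  have hdetℚ : Int.castRingHom ℚ (krylovMatrix A u).det ≠ 0 := by
    rw [RingHom.map_det, RingHom.mapMatrix_apply, krylovMatrix_map]
    refine det_krylovMatrix_ne_zero (by rwa [charpoly_map]) fun h => hu ?_
    exact funext fun i => by simpa using congrFun h i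
  have hdet : (krylovMatrix A u).det ≠ 0 := by simpa using hdetℚ
  have hcast : Int.castRingHom ℝ (krylovMatrix A u).det =
      (krylovMatrix (A.map (Int.cast : ℤ → ℝ)) fun i => (u i : ℝ)).det := by
    rw [RingHom.map_det, RingHom.mapMatrix_apply, krylovMatrix_map]
    rfl
  rw [← hcast, eq_intCast, ← Int.cast_abs]
  exact_mod_cast Int.one_le_abs hdet

theorem krylovMatrix_mulVec_of_mulVec_eq_smul {R : Type*} [CommRing R]
    {A : Matrix (Fin n) (Fin n) R} {v : Fin n → R} {lam : R} (hv : A *ᵥ v = lam • v)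
    (u : Fin n → R) : krylovMatrix A u *ᵥ v = (u ⬝ᵥ v) • fun k : Fin n => lam ^ (k : ℕ) := by
  have hpow : ∀ k : ℕ, A ^ k *ᵥ v = lam ^ k • v := by
    intro k
    induction k with
    | zero => simp
    | succ k ih => rw [pow_succ, ← mulVec_mulVec, hv, mulVec_smul, ih, smul_smul, pow_succ']
  ext k
  simp [krylovMatrix, mulVec, ← dotProduct_mulVec, hpow, mul_comm]

theorem exists_abs_krylovMatrix_apply_le (A : Matrix (Fin n) (Fin n) ℝ) :
    ∃ C, ∀ u k j, |krylovMatrix A u k j| ≤ C * ‖u‖ := by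
  let Φ : (Fin n → ℝ) →ₗ[ℝ] Fin n → Fin n → ℝ :=
    LinearMap.pi fun k : Fin n => (A ^ (k : ℕ)).vecMulLinear
  obtain ⟨C, -, hC⟩ := (LinearMap.toContinuousLinearMap Φ).bound
  refine ⟨C, fun u k j => ?_⟩
  calc |krylovMatrix A u k j| = ‖Φ u k j‖ := rfl
    _ ≤ ‖Φ u‖ := (norm_le_pi_norm _ j).trans (norm_le_pi_norm _ k)
    _ ≤ C * ‖u‖ := hC u

open scoped Nat in
theorem exists_one_le_mul_norm_pow_mul_abs_dotProduct {A : Matrix (Fin n) (Fin n) ℤ}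
    (hA : Irreducible (A.charpoly.map (Int.castRingHom ℚ))) {lam : ℝ} {v : Fin n → ℝ}
    (hv : A.map (Int.cast : ℤ → ℝ) *ᵥ v = lam • v) {j : Fin n} (hj : v j = 1) :
    ∃ K, ∀ u : Fin n → ℤ, u ≠ 0 →
      1 ≤ K * ‖fun i => (u i : ℝ)‖ ^ (n - 1) * |(fun i => (u i : ℝ)) ⬝ᵥ v| := by
  obtain ⟨C, hC⟩ := exists_abs_krylovMatrix_apply_le (A.map (Int.cast : ℤ → ℝ))
  refine ⟨n ! * (1 + |lam|) ^ n * C ^ (n - 1), fun u hu => ?_⟩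
  have hdet := one_le_abs_det_krylovMatrix_intCast hA hu
  set ur : Fin n → ℝ := fun i => (u i : ℝ)
  rw [det_eq_det_updateCol_of_mulVec_eq (krylovMatrix_mulVec_of_mulVec_eq_smul hv _) hj,
    det_updateCol_smul, abs_mul] at hdet
  have hbound := det_le_of_le_col (abv := AbsoluteValue.abs)
    (A := (krylovMatrix (A.map (Int.cast : ℤ → ℝ)) ur).updateCol j fun k => lam ^ (k : ℕ))
    (x := Function.update (fun _ => C * ‖ur‖) j ((1 + |lam|) ^ n)) fun k i => by
      rw [updateCol_apply]
      split_ifs with hij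
      · subst hij
        rw [Function.update_self, AbsoluteValue.abs_apply, abs_pow]
        calc |lam| ^ (k : ℕ) ≤ (1 + |lam|) ^ (k : ℕ) := by gcongr; linarith
          _ ≤ (1 + |lam|) ^ n := pow_le_pow_right₀ (by linarith [abs_nonneg lam]) k.is_lt.le
      · rw [Function.update_of_ne hij]
        exact hC _ _ _
  rw [Finset.prod_update_of_mem (Finset.mem_univ j), Finset.prod_const, Finset.card_univ_sdiff,
    Finset.card_singleton, Fintype.card_fin, AbsoluteValue.abs_apply, nsmul_eq_mul] at hbound
  calc 1 ≤ |ur ⬝ᵥ v| *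
        |((krylovMatrix (A.map Int.cast) ur).updateCol j fun k => lam ^ (k : ℕ)).det| := hdet
    _ ≤ |ur ⬝ᵥ v| * (n ! * ((1 + |lam|) ^ n * (C * ‖ur‖) ^ (n - 1))) := by gcongr
    _ = _ := by ring

end Krylov

theorem norm_intCast_vecCons_le {p₁ p₂ q : ℤ} {β₁ β₂ M : ℝ} (hp₁ : |(p₁ : ℝ)| ≤ M)
    (hp₂ : |(p₂ : ℝ)| ≤ M) (hM : 1 ≤ M) (hL : |p₁ * β₁ + p₂ * β₂ - q| ≤ 1) :
    ‖fun i => ((![p₁, p₂, -q] i : ℤ) : ℝ)‖ ≤ (1 + |β₁| + |β₂|) * M := by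
  have hq : |(q : ℝ)| ≤ (1 + |β₁| + |β₂|) * M := by
    calc |(q : ℝ)| = |p₁ * β₁ + p₂ * β₂ - (p₁ * β₁ + p₂ * β₂ - q)| := by ring_nf
      _ ≤ |(p₁ : ℝ)| * |β₁| + |(p₂ : ℝ)| * |β₂| + 1 := by
        grw [abs_sub, abs_add_le, abs_mul, abs_mul, hL]
      _ ≤ M * |β₁| + M * |β₂| + M := by gcongr
      _ = (1 + |β₁| + |β₂|) * M := by ring
  have hB : M ≤ (1 + |β₁| + |β₂|) * M := by nlinarith [abs_nonneg β₁, abs_nonneg β₂]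
  refine (pi_norm_le_iff_of_nonneg (by linarith)).mpr fun i => ?_
  fin_cases i <;> simp
  · linarith
  · linarith
  · exact hq

/-- Diophantine property of the strong unstable direction (generalized Liouville
theorem): if `(β₁, β₂, 1)` spans an eigendirection of an integer matrix with
irreducible characteristic polynomial, then `(β₁, β₂)` is a Diophantine vector. -/
theorem eigenvector_diophantine (A : Matrix (Fin 3) (Fin 3) ℤ)
    (hirr : Irreducible (A.charpoly.map (Int.castRingHom ℚ)))
    (lam β₁ β₂ : ℝ)
    (heig : (A.map (Int.cast : ℤ → ℝ)).mulVec ![β₁, β₂, 1] = lam • ![β₁, β₂, 1]) :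
    ∃ c > 0, ∀ p₁ p₂ : ℤ, ¬(p₁ = 0 ∧ p₂ = 0) → ∀ q : ℤ,
      |(p₁ : ℝ) * β₁ + (p₂ : ℝ) * β₂ - (q : ℝ)| >
        c / ((max |p₁| |p₂| : ℤ) : ℝ) ^ 2 := by
  obtain ⟨K, hK⟩ := exists_one_le_mul_norm_pow_mul_abs_dotProduct hirr heig (j := 2) (by simp)
  set B := 1 + |β₁| + |β₂|
  refine ⟨1 / (|K| * B ^ 2 + 2), by positivity, fun p₁ p₂ hp q => ?_⟩
  set M : ℝ := ((max |p₁| |p₂| : ℤ) : ℝ)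
  have hp₁ : |(p₁ : ℝ)| ≤ M := by rw [← Int.cast_abs]; exact Int.cast_le.mpr (le_max_left _ _)
  have hp₂ : |(p₂ : ℝ)| ≤ M := by rw [← Int.cast_abs]; exact Int.cast_le.mpr (le_max_right _ _)
  have hM : 1 ≤ M := by
    rcases not_and_or.mp hp with h | h
    · exact hp₁.trans' (by exact_mod_cast Int.one_le_abs h)
    · exact hp₂.trans' (by exact_mod_cast Int.one_le_abs h)
  set L := (p₁ : ℝ) * β₁ + p₂ * β₂ - q
  rw [gt_iff_lt, div_div, div_lt_iff₀ (by positivity)]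
  rcases le_or_gt 1 |L| with hL | hL
  · have hX : 2 ≤ (|K| * B ^ 2 + 2) * M ^ 2 := by
      nlinarith [mul_nonneg (abs_nonneg K) (sq_nonneg B), one_le_pow₀ (n := 2) hM]
    nlinarith
  · have hu : ![p₁, p₂, -q] ≠ 0 := fun h =>
      hp ⟨by simpa using congrFun h 0, by simpa using congrFun h 1⟩
    have hdot : (fun i => ((![p₁, p₂, -q] i : ℤ) : ℝ)) ⬝ᵥ ![β₁, β₂, 1] = L := by
      simp [dotProduct, Fin.sum_univ_three, L]; ring
    have hnorm := norm_intCast_vecCons_le hp₁ hp₂ hM hL.le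
    have h : 1 ≤ |K| * B ^ 2 * M ^ 2 * |L| :=
      calc 1 ≤ K * ‖fun i => ((![p₁, p₂, -q] i : ℤ) : ℝ)‖ ^ 2 * |L| := hdot ▸ hK _ hu
        _ ≤ |K| * (B * M) ^ 2 * |L| := by gcongr; exact le_abs_self K
        _ = |K| * B ^ 2 * M ^ 2 * |L| := by ring
    have hL₀ : 0 < |L| := (abs_nonneg L).lt_of_ne fun h₀ => by
      rw [← h₀, mul_zero] at h
      linarith
    nlinarith [mul_pos hL₀ (pow_pos (zero_lt_one.trans_le hM) 2)]
end

section
/- Non-integrality of the exponent ratio. Let A ∈ M₃(ℤ) have characteristic polynomial irreducible over ℚ whose complex roots are real numbers λ₁, λ₂, λ₃ with 0 < λ₁ < 1 < λ₂ < λ₃. Then log λ₃ / log λ₂ is not an integer. -/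
open Matrix Polynomial

/-!
If `log λ₃ = n log λ₂` with `n ∈ ℤ`, then `λ₃ = λ₂ ^ n` with `n ≥ 2`. So the map `x ↦ x ^ n` sends the
root `λ₂` of the irreducible characteristic polynomial to a root; hence it sends every root to a
root, in particular `λ₁`. But `0 < λ₁ ^ n < λ₁ < 1 < λ₂ < λ₃`, so `λ₁ ^ n` is none of the roots.
-/

theorem Irreducible.aeval_aeval_eq_zero {K L : Type*} [Field K] [CommRing L] [Nontrivial L]
    [Algebra K L] {p q : K[X]} (hp : Irreducible p) {α β : L} (hα : aeval α p = 0)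
    (hqα : aeval (aeval α q) p = 0) (hβ : aeval β p = 0) : aeval (aeval β q) p = 0 := by
  have hdvd : p ∣ p.comp q := (hp.dvd_iff_aeval_eq_zero hα).1 (by rwa [aeval_comp])
  rw [← aeval_comp]
  exact (hp.dvd_iff_aeval_eq_zero hβ).2 hdvd

theorem Real.eq_zpow_of_log_div_log_eq {x y : ℝ} (hx : 0 < x) (hx1 : x ≠ 1) (hy : 0 < y) {n : ℤ}
    (h : Real.log y / Real.log x = n) : y = x ^ n := by
  have hlog : Real.log y = n * Real.log x :=
    (div_eq_iff (Real.log_ne_zero_of_pos_of_ne_one hx hx1)).1 h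
  exact Real.log_injOn_pos hy (zpow_pos hx n) (by rw [Real.log_zpow, hlog])

/-- Non-integrality of the exponent ratio: if the characteristic polynomial of
`A ∈ M₃(ℤ)` is irreducible over `ℚ` with real roots `0 < λ₁ < 1 < λ₂ < λ₃`, then
`log λ₃ / log λ₂` is not an integer. -/
theorem exponent_ratio_not_integer (A : Matrix (Fin 3) (Fin 3) ℤ)
    (hirr : Irreducible (A.charpoly.map (Int.castRingHom ℚ)))
    (l1 l2 l3 : ℝ)
    (hfact : A.charpoly.map (Int.castRingHom ℝ) =
      (X - C l1) * (X - C l2) * (X - C l3))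
    (h0 : 0 < l1) (h1 : l1 < 1) (h2 : 1 < l2) (h3 : l2 < l3) :
    ¬ ∃ n : ℤ, Real.log l3 / Real.log l2 = (n : ℝ) := by
  rintro ⟨n, hn⟩
  have haeval (x : ℝ) : aeval x (A.charpoly.map (Int.castRingHom ℚ)) =
      (x - l1) * (x - l2) * (x - l3) := by
    rw [← algebraMap_int_eq, aeval_map_algebraMap, aeval_def, eval₂_eq_eval_map,
      algebraMap_int_eq, hfact]
    simp
  have hl3 : l3 = l2 ^ n := Real.eq_zpow_of_log_div_log_eq (by linarith) h2.ne' (by linarith) hn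
  have hn2 : 1 < n := by
    rw [← zpow_lt_zpow_iff_right₀ h2, zpow_one, ← hl3]
    exact h3
  lift n to ℕ using by omega
  have hl1n : aeval (aeval l1 (X ^ n : ℚ[X])) (A.charpoly.map (Int.castRingHom ℚ)) = 0 :=
    hirr.aeval_aeval_eq_zero (α := l2) (by rw [haeval]; ring)
      (by rw [haeval, map_pow, aeval_X, ← zpow_natCast, ← hl3]; ring) (by rw [haeval]; ring)
  have hlt : l1 ^ n < l1 := pow_lt_self_of_lt_one₀ h0 h1 (by exact_mod_cast hn2)
  rw [map_pow, aeval_X, haeval] at hl1n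
  rcases mul_eq_zero.1 hl1n with h | h
  · rcases mul_eq_zero.1 h with h | h <;> linarith
  · linarith
end

section
/- Total irrationality of eigendirections. Let A ∈ M₃(ℤ) have characteristic polynomial irreducible over ℚ, let λ ∈ ℝ and let v = (v₁, v₂, v₃) ∈ ℝ³ be a nonzero vector with A·v = λ·v. Then v₁, v₂, v₃ are linearly independent over ℚ. -/
/-!
The rational linear relations `c` with `∑ cᵢ vᵢ = 0` form a subspace of `ℚ³` which is invariant
under `c ↦ c ᵥ* A`, because `(c ᵥ* A) ⬝ᵥ v = c ⬝ᵥ (A *ᵥ v) = λ (c ⬝ᵥ v)`. An endomorphism with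
irreducible characteristic polynomial has no invariant subspaces but `0` and the whole space: on
an invariant subspace `W ≠ 0` the minimal polynomial of the restriction divides the characteristic
polynomial, hence equals it, and so has degree at most `dim W`. The whole space is excluded since
`v ≠ 0`.
-/

open Matrix Polynomial Module

theorem Module.End.aeval_restrict_apply {K V : Type*} [Field K] [AddCommGroup V] [Module K V]
    {f : End K V} {W : Submodule K V} (hW : ∀ x ∈ W, f x ∈ W) (p : K[X]) (x : W) :
    (aeval (f.restrict hW) p x : V) = aeval f p x := by
  induction p using Polynomial.induction_on' with
  | add p q hp hq => simp [hp, hq]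
  | monomial n a => simp [aeval_monomial, Module.End.pow_restrict n hW, LinearMap.restrict_apply]

theorem Module.End.eq_bot_or_eq_top_of_irreducible_charpoly {K V : Type*} [Field K]
    [AddCommGroup V] [Module K V] [FiniteDimensional K V] {f : End K V}
    (hf : Irreducible f.charpoly) {W : Submodule K V} (hW : ∀ x ∈ W, f x ∈ W) :
    W = ⊥ ∨ W = ⊤ := by
  refine or_iff_not_imp_left.mpr fun hW₀ => ?_
  have : Nontrivial W := Submodule.nontrivial_iff_ne_bot.mpr hW₀
  set g := f.restrict hW
  have hg : aeval g f.charpoly = 0 := by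
    ext x
    rw [Module.End.aeval_restrict_apply, LinearMap.aeval_self_charpoly]
    rfl
  have hminpoly : minpoly K g = f.charpoly :=
    eq_of_monic_of_associated (minpoly.monic (Algebra.IsIntegral.isIntegral g)) f.charpoly_monic
      ((hf.dvd_iff.mp (minpoly.dvd K g hg)).resolve_left (minpoly.not_isUnit K g)).symm
  refine Submodule.eq_top_of_finrank_eq (le_antisymm (Submodule.finrank_le W) ?_)
  calc finrank K V = (minpoly K g).natDegree := by rw [hminpoly, f.charpoly_natDegree]
    _ ≤ g.charpoly.natDegree :=
      natDegree_le_of_dvd (LinearMap.minpoly_dvd_charpoly g) g.charpoly_monic.ne_zero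
    _ = finrank K W := g.charpoly_natDegree

section Eigenvector

variable {K L n : Type*} [Field K] [Field L] [Algebra K L] [Fintype n]

theorem Fintype.linearCombination_vecMul_of_mulVec_eq_smul {A : Matrix n n K} {lam : L}
    {v : n → L} (hv : A.map (algebraMap K L) *ᵥ v = lam • v) (c : n → K) :
    Fintype.linearCombination K v (c ᵥ* A) = lam * Fintype.linearCombination K v c := by
  have hdot : ∀ w : n → K, Fintype.linearCombination K v w = (algebraMap K L ∘ w) ⬝ᵥ v := by
    intro w
    simp [Fintype.linearCombination_apply, dotProduct, Algebra.smul_def]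
  have hmap : algebraMap K L ∘ (c ᵥ* A) = (algebraMap K L ∘ c) ᵥ* A.map (algebraMap K L) :=
    funext (RingHom.map_vecMul _ A c)
  rw [hdot, hdot, hmap, ← dotProduct_mulVec, hv, dotProduct_smul, smul_eq_mul]

theorem Matrix.linearIndependent_eigenvector_of_irreducible_charpoly [DecidableEq n]
    {A : Matrix n n K} (hA : Irreducible A.charpoly) {lam : L} {v : n → L} (hv₀ : v ≠ 0)
    (hv : A.map (algebraMap K L) *ᵥ v = lam • v) : LinearIndependent K v := by
  rw [linearIndependent_iff_injective_fintypeLinearCombination, ← LinearMap.ker_eq_bot]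
  set relations := LinearMap.ker (Fintype.linearCombination K v)
  have hinvariant : ∀ c ∈ relations, Aᵀ.toLin' c ∈ relations := by
    intro c hc
    rw [LinearMap.mem_ker] at hc ⊢
    rw [toLin'_apply, mulVec_transpose, Fintype.linearCombination_vecMul_of_mulVec_eq_smul hv,
      hc, mul_zero]
  have hirr : Irreducible (Aᵀ.toLin').charpoly := by rwa [charpoly_toLin', charpoly_transpose]
  refine (Module.End.eq_bot_or_eq_top_of_irreducible_charpoly hirr hinvariant).resolve_right
    fun htop => hv₀ ?_
  ext i
  simpa using LinearMap.ext_iff.mp (LinearMap.ker_eq_top.mp htop) (Pi.single i 1)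

end Eigenvector

/-- Total irrationality of eigendirections: the coordinates of a nonzero real
eigenvector of an integer matrix with irreducible characteristic polynomial are
linearly independent over `ℚ`. -/
theorem eigenvector_totally_irrational (A : Matrix (Fin 3) (Fin 3) ℤ)
    (hirr : Irreducible (A.charpoly.map (Int.castRingHom ℚ)))
    (lam : ℝ) (v : Fin 3 → ℝ) (hv : v ≠ 0)
    (heig : (A.map (Int.cast : ℤ → ℝ)).mulVec v = lam • v) :
    LinearIndependent ℚ v := by
  refine linearIndependent_eigenvector_of_irreducible_charpoly (A := A.map (Int.castRingHom ℚ))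
    (by rwa [charpoly_map]) hv (lam := lam) ?_
  rwa [Matrix.map_map, show algebraMap ℚ ℝ ∘ Int.castRingHom ℚ = (Int.cast : ℤ → ℝ) from
    funext fun z => by simp]
end

section
/- Normalization by an iterate. Let A ∈ M₃(ℤ) with det A ∈ {1, −1}, and suppose all complex roots of the characteristic polynomial of A are real and none has modulus 1. Then there exists a nonzero integer n such that the complex roots of the characteristic polynomial of Aⁿ are three distinct real numbers μ₁, μ₂, μ₃ satisfying 0 < μ₁ < 1 < μ₂ < μ₃ (one may take n = 2 or n = −2). -/
open Matrix Polynomial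

/-!
Since `det A = ±1`, the characteristic polynomial `χ` of `A` is a monic integer cubic with constant
term `±1`, so its only possible rational roots are `±1`, which the hypothesis excludes. Hence `χ` is
irreducible over `ℚ` and its real roots `x₁, x₂, x₃` are distinct. Their squares are distinct too:
`x² = y²` with `x ≠ y` forces the third root to be `x₁ + x₂ + x₃ = tr A`, an integer. So the
eigenvalues `xᵢ²` of `A²` are three distinct positive reals, none equal to `1`, with product `1`.
Either exactly one of them lies below `1` and `n = 2` works, or exactly two do and the eigenvalues
`xᵢ⁻²` of `A⁻²` have the required shape.
-/

namespace Multiset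

theorem pow_card_eq_prod_map_const {M α : Type*} [CommMonoid M] (s : Multiset α) (c : M) :
    c ^ s.card = (s.map fun _ => c).prod := by
  rw [map_const', prod_replicate]

theorem exists_lt_lt_of_card_eq_three {α : Type*} [LinearOrder α] {s : Multiset α}
    (hcard : s.card = 3) (hs : s.Nodup) : ∃ a b c, a < b ∧ b < c ∧ s = {a, b, c} := by
  have hlen : (s.sort (· ≤ ·)).length = 3 := by rw [length_sort, hcard]
  have hsorted := s.pairwise_sort (· ≤ ·)
  have hnodup : (s.sort (· ≤ ·)).Nodup := by rw [← coe_nodup, sort_eq]; exact hs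
  have heq := s.sort_eq (· ≤ ·)
  match h : s.sort (· ≤ ·), hlen with
  | [a, b, c], _ =>
    rw [h] at hsorted hnodup heq
    simp only [List.pairwise_cons, List.mem_cons, List.not_mem_nil, List.nodup_cons]
      at hsorted hnodup
    exact ⟨a, b, c, lt_of_le_of_ne (hsorted.1 b (by simp)) (by grind),
      lt_of_le_of_ne (hsorted.2.1 c (by simp)) (by grind), heq.symm⟩

theorem nodup_map_sq_of_sum_notMem {R : Type*} [CommRing R] [NoZeroDivisors R]
    {s : Multiset R} (hcard : s.card = 3) (hs : s.Nodup) (hsum : s.sum ∉ s) :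
    (s.map (· ^ 2)).Nodup := by
  classical
  refine hs.map_on fun x hx y hy hxy => by_contra fun hne => hsum ?_
  have hyx : y = -x := by linear_combination (sq_eq_sq_iff_eq_or_eq_neg.mp hxy).resolve_left hne
  have hy' : y ∈ s.erase x := (mem_erase_of_ne (Ne.symm hne)).mpr hy
  obtain ⟨w, hw⟩ : ∃ w, (s.erase x).erase y = {w} := card_eq_one.mp (by
    rw [card_erase_of_mem hy', card_erase_of_mem hx, hcard]; rfl)
  rw [← cons_erase hx, ← cons_erase hy', hw, hyx]
  simp

theorem exists_lt_one_lt_lt_of_prod_eq_one {s : Multiset ℝ} (hcard : s.card = 3)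
    (hs : s.Nodup) (hpos : ∀ x ∈ s, 0 < x) (hne : ∀ x ∈ s, x ≠ 1) (hprod : s.prod = 1) :
    ∃ μ₁ μ₂ μ₃ : ℝ, 0 < μ₁ ∧ μ₁ < 1 ∧ 1 < μ₂ ∧ μ₂ < μ₃ ∧
      (s = {μ₁, μ₂, μ₃} ∨ s.map (·⁻¹) = {μ₁, μ₂, μ₃}) := by
  obtain ⟨a, b, c, hab, hbc, rfl⟩ := exists_lt_lt_of_card_eq_three hcard hs
  simp only [insert_eq_cons, mem_cons, mem_singleton, forall_eq_or_imp,
    forall_eq, prod_cons, prod_singleton] at hpos hne hprod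
  obtain ⟨ha, hb, -⟩ := hpos
  rcases hne.2.1.lt_or_gt with hb1 | hb1
  · have hc1 : 1 < c := by
      by_contra! hc1
      nlinarith [mul_lt_mul'' hab hb1 ha.le hb.le]
    refine ⟨c⁻¹, b⁻¹, a⁻¹, by positivity, inv_lt_one_of_one_lt₀ hc1, (one_lt_inv₀ hb).mpr hb1,
      inv_strictAnti₀ ha hab, Or.inr (coe_eq_coe.mpr (List.reverse_perm _)).symm⟩
  · have ha1 : a < 1 := by
      by_contra! ha1
      nlinarith [mul_le_mul ha1 hb1.le zero_le_one ha.le]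
    exact ⟨a, b, c, ha, ha1, hb1, hbc, Or.inl rfl⟩

theorem exists_zpow_eq_of_abs_prod_eq_one {r : Multiset ℝ} (hcard : r.card = 3)
    (hsq : (r.map (· ^ 2)).Nodup) (habs : ∀ x ∈ r, |x| ≠ 1) (hprod : |r.prod| = 1) :
    ∃ k : ℤ, k.natAbs = 2 ∧ ∃ μ₁ μ₂ μ₃ : ℝ, 0 < μ₁ ∧ μ₁ < 1 ∧ 1 < μ₂ ∧ μ₂ < μ₃ ∧
      r.map (· ^ k) = {μ₁, μ₂, μ₃} := by
  have hne0 : ∀ x ∈ r, x ≠ 0 := fun x hx h0 => by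
    simp [prod_eq_zero (h0 ▸ hx)] at hprod
  obtain ⟨μ₁, μ₂, μ₃, h0, h1, h2, h3, hμ | hμ⟩ :=
    exists_lt_one_lt_lt_of_prod_eq_one (s := r.map (· ^ 2)) (by rw [card_map, hcard]) hsq
      (by simpa using fun x hx => by have := hne0 x hx; positivity)
      (by simpa using fun x hx h => habs x hx ((abs_eq zero_le_one).mpr h))
      (by rw [prod_map_pow, map_id', ← sq_abs, hprod, one_pow])
  · exact ⟨2, rfl, μ₁, μ₂, μ₃, h0, h1, h2, h3, by simpa using hμ⟩
  · exact ⟨-2, rfl, μ₁, μ₂, μ₃, h0, h1, h2, h3,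
      by simpa [map_map, Function.comp_def] using hμ⟩

end Multiset

namespace Polynomial

theorem eq_one_or_neg_one_of_aeval_eq_zero {p : ℤ[X]} (hp : p.Monic)
    (h0 : IsUnit (p.coeff 0)) {q : ℚ} (hq : aeval q p = 0) : q = 1 ∨ q = -1 := by
  obtain ⟨m, rfl, hm⟩ := exists_integer_of_is_root_of_monic hp hq
  rcases Int.isUnit_iff.mp (isUnit_of_dvd_unit hm h0) with rfl | rfl <;> simp

theorem isRoot_map_intCast_ratCast_iff {K : Type*} [Field K] [CharZero K]
    {p : ℤ[X]} {q : ℚ} : (p.map (Int.castRingHom K)).IsRoot (q : K) ↔ aeval q p = 0 := by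
  rw [IsRoot.def, ← algebraMap_int_eq, eval_map_algebraMap, ← eq_ratCast (algebraMap ℚ K),
    aeval_algebraMap_apply, map_eq_zero_iff _ (algebraMap ℚ K).injective]

theorem nodup_roots_map_of_natDegree_le_three {K L : Type*} [Field K] [CharZero K]
    [Field L] (f : K →+* L) {p : K[X]} (hdeg : p.natDegree ∈ Finset.Icc 1 3)
    (hp : ∀ x, ¬ p.IsRoot x) : (p.map f).roots.Nodup :=
  nodup_roots (irreducible_of_degree_le_three_of_not_isRoot hdeg hp).separable.map

theorem exists_roots_eq_map_ofReal {p : ℂ[X]} (h : ∀ z, p.IsRoot z → z.im = 0) :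
    ∃ r : Multiset ℝ, p.roots = r.map (↑) := by
  refine ⟨p.roots.map Complex.re, ?_⟩
  rw [Multiset.map_map]
  conv_lhs => rw [← Multiset.map_id p.roots]
  exact Multiset.map_congr rfl fun z hz => Complex.ext rfl (by simp [h z (isRoot_of_mem_roots hz)])

end Polynomial

namespace Matrix

variable {n : Type*} [Fintype n] [DecidableEq n]

theorem eval_charpoly_sq {R : Type*} [CommRing R] (M : Matrix n n R) (t : R) :
    (M ^ 2).charpoly.eval (t ^ 2) =
      (-1) ^ Fintype.card n * M.charpoly.eval t * M.charpoly.eval (-t) := by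
  have hfactor : scalar n (t ^ 2) - M ^ 2 = (scalar n t - M) * (scalar n t + M) := by
    rw [sub_mul, mul_add, mul_add, (scalar_commute t (Commute.all t) M).eq, pow_two, pow_two,
      map_mul]
    abel
  have hneg : scalar n (-t) - M = -(scalar n t + M) := by
    rw [map_neg]; abel
  have hsign : ((-1 : R) ^ Fintype.card n) ^ 2 = 1 := by rw [← pow_mul, mul_comm, pow_mul]; simp
  rw [eval_charpoly, eval_charpoly, eval_charpoly, hfactor, det_mul, hneg, det_neg]
  linear_combination (-(scalar n t - M).det * (scalar n t + M).det) * hsign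

theorem isUnit_charpoly_coeff_zero {R : Type*} [CommRing R] (M : Matrix n n R)
    (hM : IsUnit M.det) : IsUnit (M.charpoly.coeff 0) := by
  rw [det_eq_sign_charpoly_coeff] at hM
  exact isUnit_of_mul_isUnit_right hM

theorem eval_charpoly_inv_mul_det {K : Type*} [Field K] (M : Matrix n n K) (hM : IsUnit M.det)
    {t : K} (ht : t ≠ 0) :
    M⁻¹.charpoly.eval t * M.det = (-t) ^ Fintype.card n * M.charpoly.eval t⁻¹ := by
  have hscalar : ∀ a : K, scalar n a = a • (1 : Matrix n n K) := fun a => by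
    rw [scalar_apply, smul_one_eq_diagonal]
  have hfactor : (scalar n t - M⁻¹) * M = (-t) • (scalar n t⁻¹ - M) := by
    rw [hscalar, hscalar, sub_mul, nonsing_inv_mul M hM, smul_sub, smul_smul, smul_mul, one_mul,
      neg_mul, mul_inv_cancel₀ ht, neg_smul, one_smul, neg_smul]
    abel
  rw [eval_charpoly, eval_charpoly, ← det_mul, hfactor, det_smul]

section IsAlgClosed

variable {K : Type*} [Field K] [IsAlgClosed K]

theorem charpoly_eq_prod_roots (M : Matrix n n K) :
    M.charpoly = (M.charpoly.roots.map (X - C ·)).prod :=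
  (IsAlgClosed.splits _).eq_prod_roots_of_monic M.charpoly_monic

theorem card_roots_charpoly (M : Matrix n n K) : M.charpoly.roots.card = Fintype.card n :=
  (splits_iff_card_roots.mp (IsAlgClosed.splits _)).trans M.charpoly_natDegree_eq_dim

theorem roots_charpoly_sq (M : Matrix n n K) :
    (M ^ 2).charpoly.roots = M.charpoly.roots.map (· ^ 2) := by
  suffices (M ^ 2).charpoly = ((M.charpoly.roots.map (· ^ 2)).map (X - C ·)).prod by
    rw [this, roots_multiset_prod_X_sub_C]
  have hcard := card_roots_charpoly M
  have hM := charpoly_eq_prod_roots M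
  set s := M.charpoly.roots
  refine Polynomial.funext fun t => ?_
  obtain ⟨u, rfl⟩ := IsAlgClosed.exists_pow_nat_eq t two_pos
  rw [eval_charpoly_sq, hM, ← hcard, Multiset.pow_card_eq_prod_map_const]
  simp only [eval_multiset_prod, Multiset.map_map, Function.comp_def, eval_sub, eval_X, eval_C,
    ← Multiset.prod_map_mul]
  congr 1
  exact Multiset.map_congr rfl fun z _ => by ring

theorem roots_charpoly_inv (M : Matrix n n K) (hM : IsUnit M.det) :
    M⁻¹.charpoly.roots = M.charpoly.roots.map (·⁻¹) := by
  suffices M⁻¹.charpoly = ((M.charpoly.roots.map (·⁻¹)).map (X - C ·)).prod by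
    rw [this, roots_multiset_prod_X_sub_C]
  have hcard := card_roots_charpoly M
  have hM' := charpoly_eq_prod_roots M
  have hdet := det_eq_prod_roots_charpoly M
  set s := M.charpoly.roots
  have hs : ∀ z ∈ s, z ≠ 0 := fun z hz h0 =>
    hM.ne_zero (hdet.trans (Multiset.prod_eq_zero (h0 ▸ hz)))
  refine eq_of_infinite_eval_eq _ _ ((Set.finite_singleton 0).infinite_compl.mono fun t ht => ?_)
  have ht : t ≠ 0 := ht
  refine mul_right_cancel₀ hM.ne_zero ?_
  rw [eval_charpoly_inv_mul_det M hM ht, hM', hdet, ← hcard,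
    Multiset.pow_card_eq_prod_map_const, ← Multiset.map_id' s]
  simp only [eval_multiset_prod, Multiset.map_map, Function.comp_def, eval_sub, eval_X, eval_C,
    ← Multiset.prod_map_mul]
  congr 1
  refine Multiset.map_congr rfl fun z hz => ?_
  field_simp [hs z hz]
  ring

theorem roots_charpoly_zpow_of_natAbs_eq_two (w : (Matrix n n K)ˣ) {k : ℤ} (hk : k.natAbs = 2) :
    (↑(w ^ k) : Matrix n n K).charpoly.roots = (w : Matrix n n K).charpoly.roots.map (· ^ k) := by
  obtain rfl | rfl : k = 2 ∨ k = -2 := by omega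
  · simp only [zpow_ofNat, Units.val_pow_eq_pow_val, roots_charpoly_sq]
  · simp only [_root_.zpow_neg, zpow_ofNat, ← inv_pow, Units.val_pow_eq_pow_val,
      coe_units_inv, roots_charpoly_sq, roots_charpoly_inv _ (isUnits_det_units w),
      Multiset.map_map, Function.comp_def]

end IsAlgClosed

theorem aeval_charpoly_ne_zero_of_norm_ne_one (A : Matrix n n ℤ) (hdet : IsUnit A.det)
    (hhyp : ∀ z : ℂ, (A.charpoly.map (Int.castRingHom ℂ)).IsRoot z → ‖z‖ ≠ 1) (q : ℚ) :
    aeval q A.charpoly ≠ 0 := fun hq => by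
  refine hhyp q (isRoot_map_intCast_ratCast_iff.mpr hq) ?_
  rcases eq_one_or_neg_one_of_aeval_eq_zero A.charpoly_monic
    (A.isUnit_charpoly_coeff_zero hdet) hq with rfl | rfl <;> simp

theorem nodup_roots_charpoly_map_of_aeval_ne_zero (A : Matrix n n ℤ)
    (hn : Fintype.card n ∈ Finset.Icc 1 3)
    (h : ∀ q : ℚ, aeval q A.charpoly ≠ 0) :
    (A.charpoly.map (Int.castRingHom ℂ)).roots.Nodup := by
  rw [← RingHom.ext_int ((Rat.castHom ℂ).comp (Int.castRingHom ℚ)) (Int.castRingHom ℂ),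
    ← Polynomial.map_map]
  refine nodup_roots_map_of_natDegree_le_three _ ?_ fun q hq => h q ?_
  · rwa [A.charpoly_monic.natDegree_map, charpoly_natDegree_eq_dim]
  · rwa [IsRoot.def, ← algebraMap_int_eq, eval_map_algebraMap] at hq

theorem exists_real_roots_charpoly (A : Matrix (Fin 3) (Fin 3) ℤ) (hdet : IsUnit A.det)
    (hreal : ∀ z : ℂ, (A.charpoly.map (Int.castRingHom ℂ)).IsRoot z → z.im = 0)
    (hhyp : ∀ z : ℂ, (A.charpoly.map (Int.castRingHom ℂ)).IsRoot z → ‖z‖ ≠ 1) :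
    ∃ r : Multiset ℝ, (A.charpoly.map (Int.castRingHom ℂ)).roots = r.map (↑) ∧ r.card = 3 ∧
      (r.map (· ^ 2)).Nodup ∧ (∀ x ∈ r, |x| ≠ 1) ∧ |r.prod| = 1 := by
  have hB : (A.map (Int.castRingHom ℂ)).charpoly = A.charpoly.map (Int.castRingHom ℂ) :=
    charpoly_map A _
  obtain ⟨r, hr⟩ := exists_roots_eq_map_ofReal hreal
  have hroot : ∀ x ∈ r, (A.charpoly.map (Int.castRingHom ℂ)).IsRoot x := fun x hx =>
    isRoot_of_mem_roots (hr ▸ Multiset.mem_map_of_mem _ hx)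
  have hrat := A.aeval_charpoly_ne_zero_of_norm_ne_one hdet hhyp
  have hcard : r.card = 3 := by
    rw [← Multiset.card_map ((↑) : ℝ → ℂ), ← hr, ← hB, card_roots_charpoly, Fintype.card_fin]
  have hnodup : r.Nodup :=
    (hr ▸ A.nodup_roots_charpoly_map_of_aeval_ne_zero (by simp) hrat).of_map _
  have hsum : r.sum ∉ r := fun hmem => hrat A.trace <| by
    have htrace : ((A.trace : ℚ) : ℂ) = r.sum := by
      rw [show ((r.sum : ℝ) : ℂ) = (r.map (↑)).sum from map_multiset_sum Complex.ofRealHom r,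
        ← hr, ← hB, ← trace_eq_sum_roots_charpoly]
      simp [trace]
    rw [← isRoot_map_intCast_ratCast_iff (K := ℂ), htrace]
    exact hroot _ hmem
  have hprod : |r.prod| = 1 := by
    have hdet' : ((A.det : ℝ) : ℂ) = r.prod := by
      rw [show ((r.prod : ℝ) : ℂ) = (r.map (↑)).prod from map_multiset_prod Complex.ofRealHom r,
        ← hr, ← hB, ← det_eq_prod_roots_charpoly]
      exact_mod_cast (Int.castRingHom ℂ).map_det A
    rcases Int.isUnit_iff.mp hdet with h | h <;> simp [← Complex.ofReal_injective hdet', h]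
  refine ⟨r, hr, hcard, Multiset.nodup_map_sq_of_sum_notMem hcard hnodup hsum, fun x hx => ?_,
    hprod⟩
  simpa using hhyp x (hroot x hx)

end Matrix

/-- Normalization by an iterate: if `A ∈ M₃(ℤ)` has `det A = ±1` and all roots of
its characteristic polynomial are real and off the unit circle, then some nonzero
integer power `Aⁿ` (viewed as a unit in the matrix ring over `ℚ`) has three distinct
real eigenvalues `0 < μ₁ < 1 < μ₂ < μ₃`. -/
theorem normalization_by_iterate (A : Matrix (Fin 3) (Fin 3) ℤ)
    (hdet : A.det = 1 ∨ A.det = -1)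
    (hreal : ∀ z : ℂ, (A.charpoly.map (Int.castRingHom ℂ)).IsRoot z → z.im = 0)
    (hhyp : ∀ z : ℂ, (A.charpoly.map (Int.castRingHom ℂ)).IsRoot z → ‖z‖ ≠ 1) :
    ∃ n : ℤ, n ≠ 0 ∧ ∃ u : (Matrix (Fin 3) (Fin 3) ℚ)ˣ,
      (u : Matrix (Fin 3) (Fin 3) ℚ) = A.map (Int.cast : ℤ → ℚ) ∧
      ∃ μ₁ μ₂ μ₃ : ℝ, 0 < μ₁ ∧ μ₁ < 1 ∧ 1 < μ₂ ∧ μ₂ < μ₃ ∧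
        ((u ^ n : (Matrix (Fin 3) (Fin 3) ℚ)ˣ) : Matrix (Fin 3) (Fin 3) ℚ).charpoly.map
            (Rat.castHom ℂ) =
          (X - C (μ₁ : ℂ)) * (X - C (μ₂ : ℂ)) * (X - C (μ₃ : ℂ)) := by
  have hdet' : IsUnit A.det := Int.isUnit_iff.mpr hdet
  obtain ⟨r, hr, hcard, hsq, habs, hprod⟩ := A.exists_real_roots_charpoly hdet' hreal hhyp
  obtain ⟨k, hk, μ₁, μ₂, μ₃, h₀, h₁, h₂, h₃, hμ⟩ :=
    Multiset.exists_zpow_eq_of_abs_prod_eq_one hcard hsq habs hprod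
  obtain ⟨u, hu⟩ : IsUnit (A.map (Int.cast : ℤ → ℚ)) :=
    (isUnit_iff_isUnit_det _).mpr ((Int.castRingHom ℚ).map_det A ▸ hdet'.map _)
  refine ⟨k, by omega, u, hu, μ₁, μ₂, μ₃, h₀, h₁, h₂, h₃, ?_⟩
  set w := GeneralLinearGroup.map (Rat.castHom ℂ) u
  have hw : (w : Matrix (Fin 3) (Fin 3) ℂ) = A.map (Int.castRingHom ℂ) := by
    ext i j
    simp [w, hu]
  have hmap : (↑(u ^ k) : Matrix (Fin 3) (Fin 3) ℚ).map (Rat.castHom ℂ) = ↑(w ^ k) := by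
    rw [← map_zpow]; rfl
  have hroots : (↑(w ^ k) : Matrix (Fin 3) (Fin 3) ℂ).charpoly.roots =
      ({μ₁, μ₂, μ₃} : Multiset ℝ).map (↑) := by
    rw [roots_charpoly_zpow_of_natAbs_eq_two w hk, hw, charpoly_map, hr, ← hμ]
    simp only [Multiset.map_map, Function.comp_def, Complex.ofReal_zpow]
  rw [← charpoly_map, hmap, charpoly_eq_prod_roots, hroots]
  simp [mul_assoc]
end

section
/- One-dimensional bootstrap of regularity for conjugacies of expanding maps (Lemma 3.1 in the case of one-dimensional leaves). Let r ∈ ℕ, r ≥ 2, μ > 1, K > 0. Let f, g : ℝ → ℝ be C^r diffeomorphisms such that g′(x) ≥ μ and f′(x) ≥ μ for all x ∈ ℝ, and |g^{(j)}(x)| ≤ K and |f^{(j)}(x)| ≤ K for all x ∈ ℝ and all 1 ≤ j ≤ r. Let h : ℝ → ℝ be a C¹ diffeomorphism with h ∘ g = f ∘ h and with c ≤ h′(x) ≤ C for all x, for some constants 0 < c ≤ C. Then h is of class C^r, with derivatives up to order r uniformly bounded on ℝ. -/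
/-!
Let `u` be the inverse of `g`, `p` its fixed point and `B = log g'`. Since
`(u^[k])' = exp (-∑ᵢ B ∘ u^[i+1])` and the derivatives of `B ∘ u^[i]` inherit the decay `μ⁻ⁱ`
from those of `u^[i]`, an induction on the order shows that all derivatives of `u^[k]` up to
order `r` are `O(μ⁻ᵏ)`. Hence `Ψ = ∑ₖ (B ∘ u^[k+1] - B p)` converges in `C^{r-1}` with bounded
derivatives and solves `Ψ ∘ g - Ψ = B - B p`; likewise `Φ` for `f` at the fixed point `h p`.
Differentiating `h ∘ g = f ∘ h` shows that `log h' - Φ ∘ h + Ψ` is `g`-invariant; being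
continuous, it is constant, because backward orbits of `g` converge to `p`. Thus
`h' = exp (Φ ∘ h - Ψ + const)`, and each derivative of `h` gained yields one more derivative of
the right-hand side, up to order `r`.
-/

open Real Function Filter Topology
open scoped Nat

def DerivsBoundedBy (n : ℕ) (C : ℝ) (F : ℝ → ℝ) : Prop :=
  ∀ j, 1 ≤ j → j ≤ n → ∀ x, |iteratedDeriv j F x| ≤ C

namespace DerivsBoundedBy

variable {n m : ℕ} {C D : ℝ} {F G : ℝ → ℝ}

theorem mono (h : DerivsBoundedBy n C F) (hmn : m ≤ n) (hCD : C ≤ D) :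
    DerivsBoundedBy m D F :=
  fun j hj hjm x => (h j hj (hjm.trans hmn) x).trans hCD

theorem succ (h : DerivsBoundedBy n C F) (h' : ∀ x, |iteratedDeriv (n + 1) F x| ≤ C) :
    DerivsBoundedBy (n + 1) C F := by
  intro j hj hjn x
  rcases Nat.lt_or_ge j (n + 1) with hlt | hge
  · exact h j hj (by omega) x
  · obtain rfl : j = n + 1 := by omega
    exact h' x

theorem nonneg (h : DerivsBoundedBy n C F) (hn : 1 ≤ n) : 0 ≤ C :=
  (abs_nonneg _).trans (h 1 le_rfl hn 0)

theorem neg (h : DerivsBoundedBy n C F) : DerivsBoundedBy n C fun x => -F x := by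
  intro j hj hjn x
  rw [iteratedDeriv_fun_neg, abs_neg]
  exact h j hj hjn x

theorem sub_const (h : DerivsBoundedBy n C F) (c : ℝ) : DerivsBoundedBy n C fun x => F x - c := by
  intro j hj hjn x
  simp_rw [sub_eq_neg_add]
  rw [iteratedDeriv_const_add hj]
  exact h j hj hjn x

theorem sub (hF : ContDiff ℝ n F) (hG : ContDiff ℝ n G) (hFC : DerivsBoundedBy n C F)
    (hGD : DerivsBoundedBy n D G) : DerivsBoundedBy n (C + D) fun x => F x - G x := by
  intro j hj hjn x
  have hjn' : (j : WithTop ℕ∞) ≤ n := by exact_mod_cast hjn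
  rw [← Pi.sub_def, iteratedDeriv_sub ((hF.of_le hjn').contDiffAt) ((hG.of_le hjn').contDiffAt)]
  exact (abs_sub _ _).trans (add_le_add (hFC j hj hjn x) (hGD j hj hjn x))

theorem sum {ι : Type*} (s : Finset ι) {F : ι → ℝ → ℝ} {C : ι → ℝ}
    (hF : ∀ i ∈ s, ContDiff ℝ n (F i)) (hFC : ∀ i ∈ s, DerivsBoundedBy n (C i) (F i)) :
    DerivsBoundedBy n (∑ i ∈ s, C i) fun x => ∑ i ∈ s, F i x := by
  intro j hj hjn x
  have hjn' : (j : WithTop ℕ∞) ≤ n := by exact_mod_cast hjn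
  rw [← Real.norm_eq_abs, ← norm_iteratedFDeriv_eq_norm_iteratedDeriv,
    iteratedFDeriv_sum fun i hi => (hF i hi).of_le hjn', Finset.sum_apply]
  refine (norm_sum_le _ _).trans (Finset.sum_le_sum fun i hi => ?_)
  rw [norm_iteratedFDeriv_eq_norm_iteratedDeriv]
  exact hFC i hi j hj hjn x

end DerivsBoundedBy

theorem le_max_one_pow (a : ℝ) {i : ℕ} (hi : i ≠ 0) : a ≤ max a 1 ^ i :=
  (le_max_left _ _).trans (le_self_pow₀ (le_max_right _ _) hi)

theorem abs_iteratedDeriv_comp_le {F G : ℝ → ℝ} {s : Set ℝ} {n : ℕ} (hn : 1 ≤ n)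
    (hs : IsOpen s) (hGs : ∀ x, G x ∈ s) (hF : ContDiffOn ℝ n F s) (hG : ContDiff ℝ n G)
    (x : ℝ) {C D : ℝ} (hC : ∀ i, 1 ≤ i → i ≤ n → |iteratedDeriv i F (G x)| ≤ C)
    (hD : ∀ i, 1 ≤ i → i ≤ n → |iteratedDeriv i G x| ≤ D ^ i) :
    |iteratedDeriv n (F ∘ G) x| ≤ n ! * C * D ^ n := by
  -- Subtracting the constant `F (G x)` makes the zeroth-order bound free.
  set F₀ : ℝ → ℝ := fun y => -F (G x) + F y
  have hF₀ : ∀ i, 0 < i → ∀ y, iteratedDeriv i F₀ y = iteratedDeriv i F y :=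
    fun i hi y => iteratedDeriv_const_add hi _
  have hcomp : iteratedDeriv n (F ∘ G) x = iteratedDeriv n (F₀ ∘ G) x :=
    (iteratedDeriv_const_add (f := F ∘ G) hn _).symm
  have key := norm_iteratedFDeriv_comp_le' (g := F₀) (t := s) (by rintro _ ⟨y, rfl⟩; exact hGs y)
    hs.uniqueDiffOn (contDiffOn_const.add hF) hG le_rfl x (C := C) (D := D) ?_ ?_
  · rwa [hcomp, ← Real.norm_eq_abs, ← norm_iteratedFDeriv_eq_norm_iteratedDeriv]
  · intro i hi
    rcases Nat.eq_zero_or_pos i with rfl | hi0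
    · simpa [F₀] using (abs_nonneg _).trans (hC 1 le_rfl hn)
    · rw [iteratedFDerivWithin_of_isOpen i hs (hGs x), norm_iteratedFDeriv_eq_norm_iteratedDeriv,
        Real.norm_eq_abs, hF₀ i hi0]
      exact hC i hi0 hi
  · intro i hi hin
    rw [norm_iteratedFDeriv_eq_norm_iteratedDeriv, Real.norm_eq_abs]
    exact hD i hi hin

theorem DerivsBoundedBy.comp_of_le_mul {F G : ℝ → ℝ} {n : ℕ} {K M ε : ℝ} (hF : ContDiff ℝ n F)
    (hG : ContDiff ℝ n G) (hFK : DerivsBoundedBy n K F) (hGM : DerivsBoundedBy n (M * ε) G)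
    (hε0 : 0 ≤ ε) (hε1 : ε ≤ 1) :
    DerivsBoundedBy n (n ! * K * max M 1 ^ n * ε) (F ∘ G) := by
  intro j hj hjn x
  have hK : 0 ≤ K := hFK.nonneg (hj.trans hjn)
  have hM : 1 ≤ max M 1 := le_max_right _ _
  -- Rescaling by `ε ^ (1 / j)` turns the bounds `M * ε` into bounds of the form `D ^ i`.
  set D := max M 1 * ε ^ (1 / j : ℝ)
  have hDpow (i : ℕ) : D ^ i = max M 1 ^ i * ε ^ ((i : ℝ) / j) := by
    rw [mul_pow, ← Real.rpow_natCast (ε ^ _), ← Real.rpow_mul hε0, one_div_mul_eq_div]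
  have hGD : ∀ i, 1 ≤ i → i ≤ j → |iteratedDeriv i G x| ≤ D ^ i := by
    intro i hi hij
    have hij' : (i : ℝ) / j ≤ 1 := div_le_one_of_le₀ (by exact_mod_cast hij) (by positivity)
    rw [hDpow]
    exact (hGM i hi (hij.trans hjn) x).trans <|
      mul_le_mul (le_max_one_pow M (by omega))
        (Real.self_le_rpow_of_le_one hε0 hε1 hij') hε0 (by positivity)
  have hjε : D ^ j = max M 1 ^ j * ε := by
    rw [hDpow, div_self (by positivity), Real.rpow_one]
  calc |iteratedDeriv j (F ∘ G) x| ≤ j ! * K * D ^ j :=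
        abs_iteratedDeriv_comp_le hj isOpen_univ (fun _ => Set.mem_univ _)
          (hF.of_le (by exact_mod_cast hjn)).contDiffOn (hG.of_le (by exact_mod_cast hjn)) x
          (fun i hi hij => hFK i hi (hij.trans hjn) _) hGD
    _ ≤ n ! * K * max M 1 ^ n * ε := by
        rw [hjε, ← mul_assoc]
        gcongr

theorem DerivsBoundedBy.comp {F G : ℝ → ℝ} {n : ℕ} {K M : ℝ} (hF : ContDiff ℝ n F)
    (hG : ContDiff ℝ n G) (hFK : DerivsBoundedBy n K F) (hGM : DerivsBoundedBy n M G) :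
    DerivsBoundedBy n (n ! * K * max M 1 ^ n) (F ∘ G) := by
  simpa using hFK.comp_of_le_mul hF hG (by simpa using hGM) zero_le_one le_rfl

theorem abs_iteratedDeriv_log_le {y : ℝ} (hy : 1 ≤ y) (i : ℕ) :
    |iteratedDeriv (i + 1) log y| ≤ i ! := by
  rw [iteratedDeriv_succ', deriv_log', iteratedDeriv_eq_iterate, iter_deriv_inv, abs_mul,
    abs_mul, abs_pow, abs_neg, abs_one, one_pow, one_mul, Nat.abs_cast,
    abs_of_pos (zpow_pos (by linarith) _)]
  exact mul_le_of_le_one_right (by positivity) (zpow_le_one_of_nonpos₀ hy (by omega))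

theorem DerivsBoundedBy.log_comp {F : ℝ → ℝ} {n : ℕ} {K : ℝ} (hF : ContDiff ℝ n F)
    (hF1 : ∀ x, 1 ≤ F x) (hFK : DerivsBoundedBy n K F) :
    DerivsBoundedBy n (n ! * n ! * max K 1 ^ n) fun x => log (F x) := by
  intro j hj hjn x
  have hjn' : (j : WithTop ℕ∞) ≤ n := by exact_mod_cast hjn
  have hM : 1 ≤ max K 1 := le_max_right _ _
  calc |iteratedDeriv j (log ∘ F) x| ≤ j ! * n ! * max K 1 ^ j := by
        refine abs_iteratedDeriv_comp_le hj isOpen_compl_singleton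
          (fun x => (zero_lt_one.trans_le (hF1 x)).ne') (contDiffOn_log.of_le hjn')
          (hF.of_le hjn') x (fun i hi hij => ?_) (fun i hi hij => ?_)
        · obtain ⟨l, rfl⟩ : ∃ l, i = l + 1 := ⟨i - 1, by omega⟩
          exact (abs_iteratedDeriv_log_le (hF1 x) l).trans
            (by exact_mod_cast Nat.factorial_le (by omega))
        · exact (hFK i hi (hij.trans hjn) x).trans (le_max_one_pow K (by omega))
    _ ≤ n ! * n ! * max K 1 ^ n := by gcongr

theorem abs_iteratedDeriv_succ_le_of_deriv_eq_exp {F E : ℝ → ℝ} {n : ℕ} (hE : ContDiff ℝ n E)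
    (hF : ∀ x, deriv F x = exp (E x)) {A W : ℝ} (hW : DerivsBoundedBy n W E) (x : ℝ)
    (hA : exp (E x) ≤ A) :
    |iteratedDeriv (n + 1) F x| ≤ n ! * A * max W 1 ^ n := by
  rw [iteratedDeriv_succ', funext hF, ← Real.norm_eq_abs,
    ← norm_iteratedFDeriv_eq_norm_iteratedDeriv]
  refine norm_iteratedFDeriv_comp_le contDiff_exp hE le_rfl x (fun i _ => ?_) (fun i hi hin => ?_)
  · rwa [norm_iteratedFDeriv_eq_norm_iteratedDeriv, iteratedDeriv_eq_iterate, iter_deriv_exp,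
      Real.norm_eq_abs, abs_of_pos (exp_pos _)]
  · rw [norm_iteratedFDeriv_eq_norm_iteratedDeriv, Real.norm_eq_abs]
    exact (hW i hi hin x).trans (le_max_one_pow W (by omega))

theorem contDiff_tsum_of_derivsBoundedBy {θ : ℕ → ℝ → ℝ} {v : ℕ → ℝ} {n : ℕ}
    (hθ : ∀ k, ContDiff ℝ (n + 1 : ℕ) (θ k)) (hv : Summable v)
    (hθv : ∀ k, DerivsBoundedBy (n + 1) (v k) (θ k)) {x₀ : ℝ} (h₀ : Summable fun k => θ k x₀) :
    ContDiff ℝ (n + 1 : ℕ) (fun x => ∑' k, θ k x) ∧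
      DerivsBoundedBy (n + 1) (∑' k, v k) fun x => ∑' k, θ k x := by
  have hθ' : ∀ k, ContDiff ℝ n (deriv (θ k)) := fun k => (hθ k).deriv'
  have hbound : ∀ i k x, i ≤ n → ‖iteratedFDeriv ℝ i (deriv (θ k)) x‖ ≤ v k := by
    intro i k x hi
    rw [norm_iteratedFDeriv_eq_norm_iteratedDeriv, Real.norm_eq_abs, ← iteratedDeriv_succ']
    exact hθv k (i + 1) (by omega) (by omega) x
  have hderiv : ∀ x, HasDerivAt (fun x => ∑' k, θ k x) (∑' k, deriv (θ k) x) x :=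
    hasDerivAt_tsum hv (fun k x => ((hθ k).differentiable (by simp) x).hasDerivAt)
      (fun k x => by simpa using hbound 0 k x (by omega)) h₀
  have hderiv_eq : deriv (fun x => ∑' k, θ k x) = fun x => ∑' k, deriv (θ k) x :=
    funext fun x => (hderiv x).deriv
  refine ⟨?_, ?_⟩
  · push_cast
    refine contDiff_succ_iff_deriv.2 ⟨fun x => (hderiv x).differentiableAt, by simp, ?_⟩
    rw [hderiv_eq]
    exact contDiff_tsum hθ' (fun _ _ => hv) fun i k x hi => hbound i k x (by exact_mod_cast hi)
  · intro j hj hjn x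
    obtain ⟨i, rfl⟩ : ∃ i, j = i + 1 := ⟨j - 1, by omega⟩
    rw [iteratedDeriv_succ', hderiv_eq, ← Real.norm_eq_abs,
      ← norm_iteratedFDeriv_eq_norm_iteratedDeriv, iteratedFDeriv_tsum_apply hθ'
        (fun _ _ => hv) (fun i k x hi => hbound i k x (by exact_mod_cast hi))
        (by exact_mod_cast (by omega : i ≤ n))]
    exact tsum_of_norm_bounded hv.hasSum fun k => hbound i k x (by omega)

theorem surjective_of_le_deriv {F : ℝ → ℝ} {ε : ℝ} (hε : 0 < ε) (hF : Differentiable ℝ F)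
    (h : ∀ x, ε ≤ deriv F x) : Surjective F := by
  refine hF.continuous.surjective ?_ ?_
  · refine tendsto_atTop_mono' _ ?_ (tendsto_atTop_add_const_left _ (F 0)
      (tendsto_id.const_mul_atTop hε))
    filter_upwards [eventually_ge_atTop 0] with x hx
    show F 0 + ε * x ≤ F x
    linarith [mul_sub_le_image_sub_of_le_deriv hF h hx]
  · refine tendsto_atBot_mono' _ ?_ (tendsto_atBot_add_const_left _ (F 0)
      (tendsto_id.const_mul_atBot hε))
    filter_upwards [eventually_le_atBot 0] with x hx
    show F x ≤ F 0 + ε * x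
    linarith [mul_sub_le_image_sub_of_le_deriv hF h hx]

theorem exists_fixedPt_of_le_deriv {g : ℝ → ℝ} {μ : ℝ} (hμ : 1 < μ) (hg : Differentiable ℝ g)
    (hg' : ∀ x, μ ≤ deriv g x) : ∃ p, g p = p := by
  obtain ⟨p, hp⟩ := surjective_of_le_deriv (sub_pos.2 hμ) (hg.sub differentiable_id)
    (fun x => by rw [deriv_sub (hg x) differentiableAt_id, deriv_id]; linarith [hg' x]) 0
  exact ⟨p, sub_eq_zero.1 hp⟩

theorem pow_mul_abs_sub_le_abs_iterate_sub {g : ℝ → ℝ} {μ : ℝ} (hμ : 0 ≤ μ)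
    (hg : Differentiable ℝ g) (hg' : ∀ x, μ ≤ deriv g x) (k : ℕ) (a b : ℝ) :
    μ ^ k * |a - b| ≤ |g^[k] a - g^[k] b| := by
  have expand : ∀ a b, μ * |a - b| ≤ |g a - g b| := by
    intro a b
    rcases le_total a b with hab | hab
    · have := mul_sub_le_image_sub_of_le_deriv hg hg' hab
      rw [abs_sub_comm, abs_of_nonneg (sub_nonneg.2 hab), abs_sub_comm]
      exact this.trans (le_abs_self _)
    · have := mul_sub_le_image_sub_of_le_deriv hg hg' hab
      rw [abs_of_nonneg (sub_nonneg.2 hab)]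
      exact this.trans (le_abs_self _)
  induction k with
  | zero => simp
  | succ k ih =>
    rw [pow_succ', mul_assoc, iterate_succ_apply', iterate_succ_apply']
    exact (mul_le_mul_of_nonneg_left ih hμ).trans (expand _ _)

theorem eq_of_comp_eq_of_le_deriv {g D : ℝ → ℝ} {μ : ℝ} (hμ : 1 < μ) (hg : Differentiable ℝ g)
    (hg' : ∀ x, μ ≤ deriv g x) (hD : Continuous D) (hDg : ∀ y, D (g y) = D y) (x y : ℝ) :
    D x = D y := by
  obtain ⟨p, hp⟩ := exists_fixedPt_of_le_deriv hμ hg hg'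
  suffices ∀ x, D x = D p by rw [this x, this y]
  intro x
  choose z hz using fun k => (surjective_of_le_deriv (by linarith) hg hg').iterate k x
  have hDk : ∀ k y, D (g^[k] y) = D y := by
    intro k
    induction k with
    | zero => exact fun _ => rfl
    | succ k ih => exact fun y => by rw [iterate_succ_apply, ih, hDg]
  have hzp : Tendsto z atTop (𝓝 p) := by
    have hz_le : ∀ k, |z k - p| ≤ |x - p| * μ⁻¹ ^ k := fun k => by
      have := pow_mul_abs_sub_le_abs_iterate_sub (by linarith) hg hg' k (z k) p
      rw [hz k, iterate_fixed hp] at this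
      rw [inv_pow, ← div_eq_mul_inv, le_div_iff₀ (pow_pos (by linarith) k), mul_comm]
      exact this
    have hlim : Tendsto (fun k => |x - p| * μ⁻¹ ^ k) atTop (𝓝 0) := by
      simpa using (tendsto_pow_atTop_nhds_zero_of_lt_one (inv_nonneg.2 (by linarith))
        (inv_lt_one_of_one_lt₀ hμ)).const_mul |x - p|
    exact tendsto_iff_dist_tendsto_zero.2 (squeeze_zero (fun _ => dist_nonneg) hz_le hlim)
  have hDz : ∀ k, D (z k) = D x := fun k => by rw [← hDk k, hz]
  have hlim := (hD.tendsto p).comp hzp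
  simp only [comp_def, hDz] at hlim
  exact tendsto_nhds_unique tendsto_const_nhds hlim

theorem exists_inverse_of_le_deriv {g : ℝ → ℝ} {μ : ℝ} {n : WithTop ℕ∞} (hμ : 0 < μ)
    (hg : ContDiff ℝ n g) (hn : 1 ≤ n) (hg' : ∀ x, μ ≤ deriv g x) :
    ∃ u : ℝ → ℝ, LeftInverse g u ∧ LeftInverse u g ∧ ContDiff ℝ n u ∧
      ∀ x, HasDerivAt u (deriv g (u x))⁻¹ x := by
  have hgd : Differentiable ℝ g := hg.differentiable (by positivity)
  have hpos : ∀ x, 0 < deriv g x := fun x => hμ.trans_le (hg' x)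
  let e := (strictMono_of_deriv_pos hpos).orderIsoOfSurjective g
    (surjective_of_le_deriv hμ hgd hg')
  refine ⟨e.symm, e.apply_symm_apply, e.symm_apply_apply,
    e.toHomeomorph.contDiff_symm_deriv (fun x => (hpos x).ne') (fun x => (hgd x).hasDerivAt) hg,
    fun x => ?_⟩
  exact HasDerivAt.of_local_left_inverse e.symm.continuous.continuousAt (hgd _).hasDerivAt
    (hpos _).ne' (Eventually.of_forall e.apply_symm_apply)

theorem ContDiff.iterate {u : ℝ → ℝ} {n : WithTop ℕ∞} (hu : ContDiff ℝ n u) (k : ℕ) :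
    ContDiff ℝ n u^[k] := by
  induction k with
  | zero => exact contDiff_id
  | succ k ih => rw [iterate_succ]; exact ih.comp hu

section InverseBranch

variable {u B : ℝ → ℝ} {μ : ℝ}

theorem hasDerivAt_iterate_of_hasDerivAt_exp (hu : ∀ x, HasDerivAt u (exp (-B (u x))) x)
    (k : ℕ) (x : ℝ) :
    HasDerivAt u^[k] (exp (-∑ i ∈ Finset.range k, B (u^[i + 1] x))) x := by
  induction k generalizing x with
  | zero => simpa using hasDerivAt_id x
  | succ k ih =>
    rw [iterate_succ]
    refine ((ih (u x)).comp x (hu x)).congr_deriv ?_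
    rw [← exp_add, Finset.sum_range_succ', zero_add, iterate_one]
    simp only [iterate_succ_apply]
    ring_nf

theorem exp_neg_sum_le_inv_pow (hμ : 0 < μ) (hB : ∀ x, log μ ≤ B x) (k : ℕ) (x : ℝ) :
    exp (-∑ i ∈ Finset.range k, B (u^[i + 1] x)) ≤ μ⁻¹ ^ k := by
  have hsum : k * log μ ≤ ∑ i ∈ Finset.range k, B (u^[i + 1] x) := by
    simpa using Finset.card_nsmul_le_sum (Finset.range k) _ _ fun i _ => hB (u^[i + 1] x)
  calc exp (-∑ i ∈ Finset.range k, B (u^[i + 1] x)) ≤ exp (-(k * log μ)) := by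
        gcongr
    _ = μ⁻¹ ^ k := by rw [exp_neg, exp_nat_mul, exp_log hμ, inv_pow]

theorem sum_range_inv_pow_succ_le (hμ : 1 < μ) (k : ℕ) :
    ∑ i ∈ Finset.range k, μ⁻¹ ^ (i + 1) ≤ (μ - 1)⁻¹ := by
  have hq0 : 0 ≤ μ⁻¹ := inv_nonneg.2 (by linarith)
  have h := geom_sum_Ico_le_of_lt_one (m := 1) (n := k + 1) hq0 (inv_lt_one_of_one_lt₀ hμ)
  rw [Finset.sum_Ico_eq_sum_range, add_tsub_cancel_right] at h
  calc ∑ i ∈ Finset.range k, μ⁻¹ ^ (i + 1) ≤ μ⁻¹ ^ 1 / (1 - μ⁻¹) := by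
        simpa only [add_comm 1] using h
    _ = (μ - 1)⁻¹ := by field_simp

theorem exists_derivsBoundedBy_iterate {m : ℕ} {K : ℝ} (hμ : 1 < μ)
    (hu : ContDiff ℝ (m + 1 : ℕ) u) (hu' : ∀ x, HasDerivAt u (exp (-B (u x))) x)
    (hB : ∀ x, log μ ≤ B x) (hBm : ContDiff ℝ m B) (hBK : DerivsBoundedBy m K B) :
    ∀ n ≤ m + 1, ∃ M, ∀ k, DerivsBoundedBy n (M * μ⁻¹ ^ k) u^[k] := by
  have hq0 : 0 ≤ μ⁻¹ := inv_nonneg.2 (by linarith)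
  have hq1 : μ⁻¹ < 1 := inv_lt_one_of_one_lt₀ hμ
  intro n hn
  induction n with
  | zero => exact ⟨0, fun _ j hj hj0 => absurd hj (by omega)⟩
  | succ n ih =>
    obtain ⟨M, hM⟩ := ih (by omega)
    have hnm : (n : WithTop ℕ∞) ≤ m := by exact_mod_cast (by omega : n ≤ m)
    have hnu : ∀ k, ContDiff ℝ n u^[k] := fun k =>
      (hu.iterate k).of_le (by exact_mod_cast (by omega : n ≤ m + 1))
    have hBu : ∀ i, ContDiff ℝ n fun x => B (u^[i + 1] x) := fun i =>
      (hBm.of_le hnm).comp (hnu (i + 1))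
    set C := n ! * K * max M 1 ^ n
    set W := C * (μ - 1)⁻¹
    have hW : ∀ k, DerivsBoundedBy n W fun x => -∑ i ∈ Finset.range k, B (u^[i + 1] x) := by
      intro k j hj hjn x
      have hC : 0 ≤ C := by have := hBK.nonneg (by omega); positivity
      refine ((DerivsBoundedBy.sum _ (fun i _ => hBu i) (fun i _ =>
        (hBK.mono (by omega) le_rfl).comp_of_le_mul (hBm.of_le hnm) (hnu (i + 1)) (hM (i + 1))
          (pow_nonneg hq0 _) (pow_le_one₀ hq0 hq1.le))).neg j hj hjn x).trans ?_
      rw [← Finset.mul_sum]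
      exact mul_le_mul_of_nonneg_left (sum_range_inv_pow_succ_le hμ k) hC
    refine ⟨max M (n ! * max W 1 ^ n), fun k => DerivsBoundedBy.succ ((hM k).mono le_rfl ?_) ?_⟩
    · exact mul_le_mul_of_nonneg_right (le_max_left _ _) (pow_nonneg hq0 k)
    · intro x
      refine (abs_iteratedDeriv_succ_le_of_deriv_eq_exp (ContDiff.sum fun i _ => hBu i).neg
        (fun y => (hasDerivAt_iterate_of_hasDerivAt_exp hu' k y).deriv) (hW k) x
        (exp_neg_sum_le_inv_pow (by linarith) hB k x)).trans ?_
      rw [mul_right_comm]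
      exact mul_le_mul_of_nonneg_right (le_max_right _ _) (pow_nonneg hq0 k)

theorem exists_sub_comp_eq_of_hasDerivAt_exp {n : ℕ} {K p : ℝ} (hμ : 1 < μ)
    (hu : ContDiff ℝ (n + 2 : ℕ) u) (hu' : ∀ x, HasDerivAt u (exp (-B (u x))) x)
    (hB : ∀ x, log μ ≤ B x) (hBm : ContDiff ℝ (n + 1 : ℕ) B) (hBK : DerivsBoundedBy (n + 1) K B)
    (hp : u p = p) :
    ∃ Ψ : ℝ → ℝ, ContDiff ℝ (n + 1 : ℕ) Ψ ∧ (∃ C, DerivsBoundedBy (n + 1) C Ψ) ∧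
      ∀ x, Ψ x - Ψ (u x) = B (u x) - B p := by
  have hq0 : 0 ≤ μ⁻¹ := inv_nonneg.2 (by linarith)
  have hq1 : μ⁻¹ < 1 := inv_lt_one_of_one_lt₀ hμ
  obtain ⟨M, hM⟩ := exists_derivsBoundedBy_iterate hμ hu hu' hB hBm hBK (n + 1) (by omega)
  have hiter : ∀ k, ContDiff ℝ (n + 1 : ℕ) u^[k] := fun k =>
    (hu.iterate k).of_le (by exact_mod_cast (by omega : n + 1 ≤ n + 2))
  set θ : ℕ → ℝ → ℝ := fun k x => B (u^[k + 1] x) - B p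
  have hθ : ∀ k, ContDiff ℝ (n + 1 : ℕ) (θ k) := fun k =>
    (hBm.comp (hiter (k + 1))).sub contDiff_const
  set C := (n + 1)! * K * max M 1 ^ (n + 1)
  have hθC : ∀ k, DerivsBoundedBy (n + 1) (C * μ⁻¹ ^ (k + 1)) (θ k) := fun k =>
    (hBK.comp_of_le_mul hBm (hiter (k + 1)) (hM (k + 1)) (pow_nonneg hq0 _)
      (pow_le_one₀ hq0 hq1.le)).sub_const _
  have hv : Summable fun k => C * μ⁻¹ ^ (k + 1) := by
    simpa [pow_succ, mul_assoc, mul_comm, mul_left_comm] using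
      (summable_geometric_of_lt_one hq0 hq1).mul_left (C * μ⁻¹)
  have hθp : Summable fun k => θ k p := by
    simp only [θ, iterate_fixed hp, sub_self]
    exact summable_zero
  obtain ⟨hΨ, hΨC⟩ := contDiff_tsum_of_derivsBoundedBy hθ hv hθC hθp
  refine ⟨_, hΨ, ⟨_, hΨC⟩, fun x => ?_⟩
  have hsum : Summable fun k => θ k x :=
    summable_of_summable_hasDerivAt hv
      (fun k x => ((hθ k).differentiable (by simp) x).hasDerivAt)
      (fun k x => by simpa using hθC k 1 le_rfl (by omega) x) hθp x
  rw [hsum.tsum_eq_zero_add]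
  simp only [θ, iterate_succ_apply, iterate_zero_apply]
  ring

end InverseBranch

theorem exists_coboundary_log_deriv {g : ℝ → ℝ} {μ K : ℝ} {n : ℕ} (hμ : 1 < μ)
    (hg : ContDiff ℝ (n + 2 : ℕ) g) (hg' : ∀ x, μ ≤ deriv g x)
    (hgK : DerivsBoundedBy (n + 2) K g) {p : ℝ} (hp : g p = p) :
    ∃ Ψ : ℝ → ℝ, ContDiff ℝ (n + 1 : ℕ) Ψ ∧ (∃ C, DerivsBoundedBy (n + 1) C Ψ) ∧
      ∀ y, Ψ (g y) - Ψ y = log (deriv g y) - log (deriv g p) := by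
  have hpos : ∀ x, 0 < deriv g x := fun x => (by linarith : (0 : ℝ) < μ).trans_le (hg' x)
  have hg1 : ContDiff ℝ (n + 1 : ℕ) (deriv g) := hg.deriv'
  have hBK := DerivsBoundedBy.log_comp hg1 (fun x => hμ.le.trans (hg' x)) fun j hj hjn x => by
    rw [← iteratedDeriv_succ']
    exact hgK (j + 1) (by omega) (by omega) x
  obtain ⟨u, -, hug, hu, hu'⟩ := exists_inverse_of_le_deriv (by linarith) hg
    (by exact_mod_cast (by omega : 1 ≤ n + 2)) hg'
  have hu_exp : ∀ x, HasDerivAt u (exp (-log (deriv g (u x)))) x := fun x => by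
    rw [exp_neg, exp_log (hpos _)]
    exact hu' x
  obtain ⟨Ψ, hΨ, hΨC, hΨu⟩ := exists_sub_comp_eq_of_hasDerivAt_exp hμ hu hu_exp
    (fun x => log_le_log (by linarith) (hg' x)) (hg1.log fun x => (hpos x).ne') hBK
    (by simpa only [hp] using hug p)
  refine ⟨Ψ, hΨ, hΨC, fun y => ?_⟩
  simpa only [hug y] using hΨu (g y)

theorem contDiff_of_deriv_eq_exp {h F G : ℝ → ℝ} {m : ℕ} (hh : Differentiable ℝ h)
    (hF : ContDiff ℝ m F) (hG : ContDiff ℝ m G) (hdh : ∀ x, deriv h x = exp (F (h x) - G x)) :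
    ContDiff ℝ (m + 1 : ℕ) h := by
  suffices ∀ k ≤ m + 1, ContDiff ℝ k h from this (m + 1) le_rfl
  intro k hk
  induction k with
  | zero => exact contDiff_zero.2 hh.continuous
  | succ k ih =>
    have hkm : (k : WithTop ℕ∞) ≤ m := by exact_mod_cast (by omega : k ≤ m)
    push_cast
    refine contDiff_succ_iff_deriv.2 ⟨hh, by simp, ?_⟩
    rw [funext hdh]
    exact (((hF.of_le hkm).comp (ih (by omega))).sub (hG.of_le hkm)).exp

theorem exists_derivsBoundedBy_of_deriv_eq_exp {h F G : ℝ → ℝ} {m : ℕ} {K C : ℝ}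
    (hh : Differentiable ℝ h) (hF : ContDiff ℝ m F) (hG : ContDiff ℝ m G)
    (hFK : DerivsBoundedBy m K F) (hGK : DerivsBoundedBy m K G)
    (hdh : ∀ x, deriv h x = exp (F (h x) - G x)) (hC : ∀ x, deriv h x ≤ C) :
    ∃ N, DerivsBoundedBy (m + 1) N h := by
  have hh' := contDiff_of_deriv_eq_exp hh hF hG hdh
  suffices ∀ n ≤ m + 1, ∃ N, DerivsBoundedBy n N h from this (m + 1) le_rfl
  intro n hn
  induction n with
  | zero => exact ⟨0, fun _ j hj hj0 => absurd hj (by omega)⟩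
  | succ n ih =>
    obtain ⟨N, hN⟩ := ih (by omega)
    have hnm : (n : WithTop ℕ∞) ≤ m := by exact_mod_cast (by omega : n ≤ m)
    have hhn : ContDiff ℝ n h := hh'.of_le (by exact_mod_cast (by omega : n ≤ m + 1))
    have hE : ContDiff ℝ n fun x => F (h x) - G x := ((hF.of_le hnm).comp hhn).sub (hG.of_le hnm)
    have hW := DerivsBoundedBy.sub ((hF.of_le hnm).comp hhn) (hG.of_le hnm)
      ((hFK.mono (by omega) le_rfl).comp (hF.of_le hnm) hhn hN) (hGK.mono (by omega) le_rfl)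
    refine ⟨max N (n ! * C * max (n ! * K * max N 1 ^ n + K) 1 ^ n),
      (hN.mono le_rfl (le_max_left _ _)).succ fun x => ?_⟩
    exact (abs_iteratedDeriv_succ_le_of_deriv_eq_exp hE hdh hW x (hdh x ▸ hC x)).trans
      (le_max_right _ _)

theorem deriv_comp_mul_deriv_of_semiconj {f g h : ℝ → ℝ} (hf : Differentiable ℝ f)
    (hg : Differentiable ℝ g) (hh : Differentiable ℝ h) (hconj : Semiconj h g f) (y : ℝ) :
    deriv h (g y) * deriv g y = deriv f (h y) * deriv h y := by
  have hhg := (hh (g y)).hasDerivAt.comp y (hg y).hasDerivAt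
  rw [hconj.comp_eq] at hhg
  exact hhg.unique ((hf (h y)).hasDerivAt.comp y (hh y).hasDerivAt)

theorem log_deriv_sub_comp_semiconj {f g h Φ Ψ : ℝ → ℝ} {p : ℝ} (hconj : Semiconj h g f)
    (hchain : ∀ y, deriv h (g y) * deriv g y = deriv f (h y) * deriv h y)
    (hf : ∀ x, 0 < deriv f x) (hg : ∀ x, 0 < deriv g x) (hh : ∀ x, 0 < deriv h x)
    (hp : g p = p) (hΦ : ∀ y, Φ (f y) - Φ y = log (deriv f y) - log (deriv f (h p)))
    (hΨ : ∀ y, Ψ (g y) - Ψ y = log (deriv g y) - log (deriv g p)) (y : ℝ) :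
    log (deriv h (g y)) - (Φ (h (g y)) - Ψ (g y)) = log (deriv h y) - (Φ (h y) - Ψ y) := by
  have hfp : deriv f (h p) = deriv g p := by
    have := hchain p
    rw [hp] at this
    exact mul_right_cancel₀ (hh p).ne' (by linarith)
  have hlog : log (deriv h (g y)) + log (deriv g y) = log (deriv f (h y)) + log (deriv h y) := by
    rw [← log_mul (hh _).ne' (hg _).ne', ← log_mul (hf _).ne' (hh _).ne', hchain]
  rw [hconj y]
  linarith [hfp ▸ hΦ (h y), hΨ y]

theorem one_dimensional_bootstrap_general (r : ℕ) (hr : 2 ≤ r) (μ K : ℝ)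
    (hμ : 1 < μ)
    (f g : ℝ → ℝ)
    (hf : ContDiff ℝ r f) (hg : ContDiff ℝ r g)
    (hg' : ∀ x, μ ≤ deriv g x) (hf' : ∀ x, μ ≤ deriv f x)
    (hgK : ∀ j, 1 ≤ j → j ≤ r → ∀ x, |iteratedDeriv j g x| ≤ K)
    (hfK : ∀ j, 1 ≤ j → j ≤ r → ∀ x, |iteratedDeriv j f x| ≤ K)
    (h : ℝ → ℝ) (hh : ContDiff ℝ 1 h)
    (hconj : ∀ x, h (g x) = f (h x))
    (c C : ℝ) (hc : 0 < c)
    (hh' : ∀ x, c ≤ deriv h x ∧ deriv h x ≤ C) :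
    ContDiff ℝ r h ∧
    ∀ j, 1 ≤ j → j ≤ r → ∃ K' : ℝ, ∀ x, |iteratedDeriv j h x| ≤ K' := by
  obtain ⟨n, rfl⟩ : ∃ n, r = n + 2 := ⟨r - 2, by omega⟩
  have hgd : Differentiable ℝ g := hg.differentiable (by simp)
  have hfd : Differentiable ℝ f := hf.differentiable (by simp)
  have hhd : Differentiable ℝ h := hh.differentiable one_ne_zero
  have hpos : ∀ x, 0 < deriv h x := fun x => hc.trans_le (hh' x).1
  obtain ⟨p, hp⟩ := exists_fixedPt_of_le_deriv hμ hgd hg'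
  obtain ⟨Ψ, hΨ, ⟨KΨ, hΨK⟩, hΨg⟩ := exists_coboundary_log_deriv hμ hg hg' hgK hp
  obtain ⟨Φ, hΦ, ⟨KΦ, hΦK⟩, hΦf⟩ :=
    exists_coboundary_log_deriv hμ hf hf' hfK (by rw [← hconj, hp] : f (h p) = h p)
  set D := fun x => log (deriv h x) - (Φ (h x) - Ψ x)
  have hD : ∀ x, D x = D p := fun x =>
    eq_of_comp_eq_of_le_deriv hμ hgd hg'
      (((hh.continuous_deriv le_rfl).log fun x => (hpos x).ne').sub
        ((hΦ.continuous.comp hh.continuous).sub hΨ.continuous))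
      (log_deriv_sub_comp_semiconj hconj (deriv_comp_mul_deriv_of_semiconj hfd hgd hhd hconj)
        (fun x => by linarith [hf' x]) (fun x => by linarith [hg' x]) hpos hp hΦf hΨg) x p
  have hdh : ∀ x, deriv h x = exp (Φ (h x) - (Ψ x - D p)) := fun x => by
    rw [← hD x, show Φ (h x) - (Ψ x - D x) = log (deriv h x) by simp only [D]; ring,
      exp_log (hpos x)]
  obtain ⟨N, hN⟩ := exists_derivsBoundedBy_of_deriv_eq_exp hhd hΦ (hΨ.sub contDiff_const)
    (hΦK.mono le_rfl (le_max_left _ _)) ((hΨK.sub_const _).mono le_rfl (le_max_right KΦ _)) hdh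
    fun x => (hh' x).2
  exact ⟨contDiff_of_deriv_eq_exp hhd hΦ (hΨ.sub contDiff_const) hdh,
    fun j hj hjr => ⟨N, hN j hj hjr⟩⟩

/-- One-dimensional bootstrap of regularity for conjugacies of uniformly expanding
maps of the line: a `C¹` conjugacy with derivative bounded away from `0` and `∞`
between two uniformly `C^r` uniformly expanding diffeomorphisms is `C^r` with
uniformly bounded derivatives. -/
theorem one_dimensional_bootstrap (r : ℕ) (hr : 2 ≤ r) (μ K : ℝ)
    (hμ : 1 < μ) (hK : 0 < K)
    (f g : ℝ → ℝ)
    (hf : ContDiff ℝ r f) (hg : ContDiff ℝ r g)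
    (hfb : Function.Bijective f) (hgb : Function.Bijective g)
    (hg' : ∀ x, μ ≤ deriv g x) (hf' : ∀ x, μ ≤ deriv f x)
    (hgK : ∀ j, 1 ≤ j → j ≤ r → ∀ x, |iteratedDeriv j g x| ≤ K)
    (hfK : ∀ j, 1 ≤ j → j ≤ r → ∀ x, |iteratedDeriv j f x| ≤ K)
    (h : ℝ → ℝ) (hh : ContDiff ℝ 1 h) (hhb : Function.Bijective h)
    (hconj : ∀ x, h (g x) = f (h x))
    (c C : ℝ) (hc : 0 < c) (hcC : c ≤ C)
    (hh' : ∀ x, c ≤ deriv h x ∧ deriv h x ≤ C) :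
    ContDiff ℝ r h ∧
    ∀ j, 1 ≤ j → j ≤ r → ∃ K' : ℝ, ∀ x, |iteratedDeriv j h x| ≤ K' :=
  one_dimensional_bootstrap_general r hr μ K hμ f g hf hg hg' hf' hgK hfK h hh hconj c C hc hh'
end

section
/- Uniqueness of dynamical densities (one-dimensional case). Let g : ℝ → ℝ be a C¹ diffeomorphism with μ ≤ g′(x) ≤ K for all x, where μ > 1 and K > 0. Suppose ρ : ℝ × ℝ → ℝ satisfies: (1) ρ(x, x) = 1 for all x; (2) for every R > 0 and ε > 0 there exists δ > 0 such that for all x and all y, y′ ∈ [x − R, x + R] with |y − y′| ≤ δ one has |ρ(x, y) − ρ(x, y′)| ≤ ε; and (3) ρ(g(x), g(y)) = (g′(x)/g′(y))·ρ(x, y) for all x, y ∈ ℝ. Then ρ(x, y) = ∏_{n≥1} g′(g^{-n}(x)) / g′(g^{-n}(y)) for all x, y ∈ ℝ; in particular any two functions satisfying (1)–(3) coincide. -/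
open Filter Topology
open scoped NNReal

/-!
Pulling the cocycle relation back along `h = g⁻¹` `N` times gives
`ρ x y = (∏_{n < N} g′(hⁿ⁺¹ x) / g′(hⁿ⁺¹ y)) · ρ (hᴺ x) (hᴺ y)`.
Since `g′ ≥ μ > 1`, the inverse `h` contracts distances by `μ⁻¹`, so `hᴺ x` and `hᴺ y` merge,
and by equicontinuity together with `ρ(z, z) = 1` the last factor tends to `1`.
-/

theorem antilipschitzWith_of_le_deriv {f : ℝ → ℝ} (hf : Differentiable ℝ f) {C : ℝ≥0}
    (hC : 0 < C) (hf' : ∀ x, C ≤ deriv f x) : AntilipschitzWith C⁻¹ f := by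
  refine AntilipschitzWith.of_le_mul_dist fun x y => ?_
  wlog hxy : x ≤ y generalizing x y
  · rw [dist_comm, dist_comm (f x)]
    exact this y x (le_of_not_ge hxy)
  have hgrowth := mul_sub_le_image_sub_of_le_deriv hf hf' hxy
  have hC' : (0 : ℝ) < C := hC
  rw [Real.dist_eq, Real.dist_eq, abs_sub_comm, abs_of_nonneg (sub_nonneg.2 hxy),
    abs_sub_comm, abs_of_nonneg (by nlinarith), NNReal.coe_inv, inv_mul_eq_div,
    le_div_iff₀ hC']
  linarith

theorem ContractingWith.tendsto_dist_iterate {α : Type*} [MetricSpace α] {K : ℝ≥0}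
    {f : α → α} (hf : ContractingWith K f) (x y : α) :
    Tendsto (fun n => dist (f^[n] x) (f^[n] y)) atTop (𝓝 0) := by
  have hlim : Tendsto (fun n => (K : ℝ) ^ n * dist x y) atTop (𝓝 (0 * dist x y)) :=
    (tendsto_pow_atTop_nhds_zero_of_lt_one K.coe_nonneg hf.1).mul_const _
  rw [zero_mul] at hlim
  refine squeeze_zero (fun n => dist_nonneg) (fun n => ?_) hlim
  simpa using (hf.2.iterate n).dist_le_mul x y

theorem eq_prod_mul_iterate_rightInverse {α 𝕜 : Type*} [Field 𝕜] {g h : α → α}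
    (hgh : Function.RightInverse h g) {D : α → 𝕜} {ρ : α → α → 𝕜}
    (hρ : ∀ x y, ρ (g x) (g y) = (D x / D y) * ρ x y) (x y : α) (N : ℕ) :
    ρ x y = (∏ n ∈ Finset.range N, D (h^[n + 1] x) / D (h^[n + 1] y)) * ρ (h^[N] x) (h^[N] y) := by
  induction N with
  | zero => simp
  | succ N ih =>
    have hstep := hρ (h^[N + 1] x) (h^[N + 1] y)
    simp only [Function.iterate_succ_apply', hgh _] at hstep
    rw [Finset.prod_range_succ, ih, hstep, Function.iterate_succ_apply' h N x,
      Function.iterate_succ_apply' h N y, mul_assoc]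

theorem tendsto_one_of_tendsto_dist_zero {ι : Type*} {l : Filter ι} {ρ : ℝ → ℝ → ℝ}
    (h1 : ∀ x, ρ x x = 1)
    (h2 : ∀ ε > (0 : ℝ), ∃ δ > (0 : ℝ), ∀ x y y' : ℝ,
      y ∈ Set.Icc (x - 1) (x + 1) → y' ∈ Set.Icc (x - 1) (x + 1) →
      |y - y'| ≤ δ → |ρ x y - ρ x y'| ≤ ε)
    {a b : ι → ℝ} (hab : Tendsto (fun i => dist (a i) (b i)) l (𝓝 0)) :
    Tendsto (fun i => ρ (a i) (b i)) l (𝓝 1) := by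
  refine Metric.tendsto_nhds.2 fun ε hε => ?_
  obtain ⟨δ, hδ, hρδ⟩ := h2 (ε / 2) (half_pos hε)
  filter_upwards [Metric.tendsto_nhds.1 hab (min δ 1) (by positivity)] with i hi
  rw [Real.dist_eq, sub_zero, abs_dist, Real.dist_eq, lt_min_iff] at hi
  have hb : b i ∈ Set.Icc (a i - 1) (a i + 1) := by
    constructor <;> linarith [abs_lt.1 hi.2]
  have ha : a i ∈ Set.Icc (a i - 1) (a i + 1) := by constructor <;> linarith
  have hclose := hρδ (a i) (b i) (a i) hb ha (by rw [abs_sub_comm]; exact hi.1.le)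
  rw [h1, ← Real.dist_eq] at hclose
  linarith

theorem dynamical_densities_unique_general (μ K : ℝ) (hμ : 1 < μ)
    (g : ℝ → ℝ) (hg : ContDiff ℝ 1 g) (hgb : Function.Bijective g)
    (hg' : ∀ x, μ ≤ deriv g x ∧ deriv g x ≤ K)
    (ρ : ℝ → ℝ → ℝ)
    (h1 : ∀ x, ρ x x = 1)
    (h2 : ∀ R > (0 : ℝ), ∀ ε > (0 : ℝ), ∃ δ > (0 : ℝ), ∀ x y y' : ℝ,
      y ∈ Set.Icc (x - R) (x + R) → y' ∈ Set.Icc (x - R) (x + R) →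
      |y - y'| ≤ δ → |ρ x y - ρ x y'| ≤ ε)
    (h3 : ∀ x y, ρ (g x) (g y) = (deriv g x / deriv g y) * ρ x y) :
    ∀ x y : ℝ, Tendsto (fun N => ∏ n ∈ Finset.range N,
        deriv g ((Function.invFun g)^[n + 1] x) /
          deriv g ((Function.invFun g)^[n + 1] y))
      atTop (nhds (ρ x y)) := by
  intro x y
  set h := Function.invFun g
  have hgh : Function.RightInverse h g := Function.rightInverse_invFun hgb.surjective
  have hμ₀ : 0 < μ := one_pos.trans hμ
  have hg_anti : AntilipschitzWith (⟨μ, hμ₀.le⟩ : ℝ≥0)⁻¹ g :=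
    antilipschitzWith_of_le_deriv (hg.differentiable one_ne_zero) hμ₀ fun z => (hg' z).1
  have hh : ContractingWith (⟨μ, hμ₀.le⟩ : ℝ≥0)⁻¹ h :=
    ⟨inv_lt_one_of_one_lt₀ hμ, hg_anti.to_rightInverse hgh⟩
  have hρ : Tendsto (fun N => ρ (h^[N] x) (h^[N] y)) atTop (𝓝 1) :=
    tendsto_one_of_tendsto_dist_zero h1 (h2 1 one_pos) (hh.tendsto_dist_iterate x y)
  have hquot := (tendsto_const_nhds (x := ρ x y)).div hρ one_ne_zero
  rw [div_one] at hquot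
  refine hquot.congr' ?_
  filter_upwards [hρ.eventually_ne one_ne_zero] with N hN
  rw [Pi.div_apply, eq_prod_mul_iterate_rightInverse hgh h3 x y N, mul_div_cancel_right₀ _ hN]

/-- Uniqueness of dynamical densities in the one-dimensional case: any family
`ρ(x, ·)` which is normalized, equicontinuous on balls of any fixed radius, and
transforms correctly under `g` must coincide with the telescopic product
`∏_{n ≥ 1} g′(g^{-n}(x)) / g′(g^{-n}(y))`. -/
theorem dynamical_densities_unique (μ K : ℝ) (hμ : 1 < μ) (hK : 0 < K)
    (g : ℝ → ℝ) (hg : ContDiff ℝ 1 g) (hgb : Function.Bijective g)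
    (hg' : ∀ x, μ ≤ deriv g x ∧ deriv g x ≤ K)
    (ρ : ℝ → ℝ → ℝ)
    (h1 : ∀ x, ρ x x = 1)
    (h2 : ∀ R > (0 : ℝ), ∀ ε > (0 : ℝ), ∃ δ > (0 : ℝ), ∀ x y y' : ℝ,
      y ∈ Set.Icc (x - R) (x + R) → y' ∈ Set.Icc (x - R) (x + R) →
      |y - y'| ≤ δ → |ρ x y - ρ x y'| ≤ ε)
    (h3 : ∀ x y, ρ (g x) (g y) = (deriv g x / deriv g y) * ρ x y) :
    ∀ x y : ℝ, Tendsto (fun N => ∏ n ∈ Finset.range N,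
        deriv g ((Function.invFun g)^[n + 1] x) /
          deriv g ((Function.invFun g)^[n + 1] y))
      atTop (nhds (ρ x y)) :=
  dynamical_densities_unique_general μ K hμ g hg hgb hg' ρ h1 h2 h3
end
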